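/- arXiv:2107.14461 — 4 statements merged into one kernel-verified Lean document; each statement's English description precedes it below -/
import Mathlib

section
/- Let (W, S) be a Coxeter group with length function ℓ. There is a unique associative monoid operation ∗ (the Demazure product) on W such that w ∗ w' = w w' whenever ℓ(w w') = ℓ(w) + ℓ(w'), and s ∗ w = w for any simple reflection s ∈ S and w ∈ W with ℓ(s w) < ℓ(w). -/
open CoxeterSystem List

namespace DemazureAux

attribute [local instance] Classical.propDecidable

variable {B W : Type*} [Group W] {M : CoxeterMatrix B} (cs : CoxeterSystem M W)

lemma zmod2_add_self (x : ZMod 2) : x + x = 0 := by revert x; decide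

lemma conj_eq_iff (g x y : W) : g * x * g⁻¹ = y ↔ x = g⁻¹ * y * g := by
  constructor
  · rintro rfl; group
  · rintro rfl; group

lemma simple_conj_eq_iff (j : B) (x y : W) :
    cs.simple j * x * cs.simple j = y ↔ x = cs.simple j * y * cs.simple j := by
  constructor
  · intro h
    rw [← h]
    simp [mul_assoc, cs.simple_mul_simple_cancel_left, cs.simple_mul_simple_self]
  · intro h
    rw [h]
    simp [mul_assoc, cs.simple_mul_simple_cancel_left, cs.simple_mul_simple_self]

/-- The sign-tracking permutation attached to a simple reflection. -/
noncomputable def sig (i : B) : Equiv.Perm (W × ZMod 2) :=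
  Function.Involutive.toPerm
    (fun p => (cs.simple i * p.1 * cs.simple i, p.2 + if p.1 = cs.simple i then 1 else 0))
    (by
      rintro ⟨t, e⟩
      have hcond : (cs.simple i * t * cs.simple i = cs.simple i) ↔ t = cs.simple i := by
        rw [simple_conj_eq_iff]
        rw [cs.simple_mul_simple_self, one_mul]
      refine Prod.ext ?_ ?_
      · simp [mul_assoc, cs.simple_mul_simple_cancel_left, cs.simple_mul_simple_self]
      · simp only [hcond]
        by_cases h : t = cs.simple i
        · simp only [h, if_pos]
          rw [add_assoc]
          rw [show (1 : ZMod 2) + 1 = 0 from zmod2_add_self 1, add_zero]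
        · simp [h])

lemma sig_apply (i : B) (t : W) (e : ZMod 2) :
    sig cs i (t, e) = (cs.simple i * t * cs.simple i, e + if t = cs.simple i then 1 else 0) :=
  rfl

lemma sj_mul_a (i j : B) :
    cs.simple j * (cs.simple i * cs.simple j)
      = (cs.simple i * cs.simple j)⁻¹ * cs.simple j := by
  rw [mul_inv_rev, cs.inv_simple, cs.inv_simple, mul_assoc]

lemma simple_mul_pow (i j : B) (r : ℕ) :
    cs.simple j * (cs.simple i * cs.simple j) ^ r
      = ((cs.simple i * cs.simple j)⁻¹) ^ r * cs.simple j := by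
  induction r with
  | zero => simp
  | succ r ih =>
      calc cs.simple j * (cs.simple i * cs.simple j) ^ (r + 1)
          = (cs.simple j * (cs.simple i * cs.simple j) ^ r) * (cs.simple i * cs.simple j) := by
            rw [pow_succ, mul_assoc]
        _ = ((cs.simple i * cs.simple j)⁻¹) ^ r
              * (cs.simple j * (cs.simple i * cs.simple j)) := by rw [ih, mul_assoc]
        _ = ((cs.simple i * cs.simple j)⁻¹) ^ (r + 1) * cs.simple j := by
            rw [sj_mul_a, pow_succ, mul_assoc]

lemma conj_pow_sj (i j : B) (r : ℕ) :
    ((cs.simple i * cs.simple j) ^ r)⁻¹ * cs.simple j * (cs.simple i * cs.simple j) ^ r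
      = ((cs.simple i * cs.simple j)⁻¹) ^ (2 * r) * cs.simple j := by
  rw [mul_assoc, simple_mul_pow, ← mul_assoc, two_mul, pow_add, inv_pow]

lemma conj_pow_sjsisj (i j : B) (r : ℕ) :
    ((cs.simple i * cs.simple j) ^ r)⁻¹
        * (cs.simple j * cs.simple i * cs.simple j) * (cs.simple i * cs.simple j) ^ r
      = ((cs.simple i * cs.simple j)⁻¹) ^ (2 * r + 1) * cs.simple j := by
  have h : cs.simple j * cs.simple i * cs.simple j
      = (cs.simple i * cs.simple j)⁻¹ * cs.simple j := by
    rw [← sj_mul_a, mul_assoc]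
  rw [h, ← mul_assoc, mul_assoc _ _ ((cs.simple i * cs.simple j) ^ r), simple_mul_pow,
    ← mul_assoc]
  rw [show 2 * r + 1 = r + 1 + r by ring, pow_add, pow_succ, inv_pow]

lemma sig_braid (i j : B) : ((sig cs i) * (sig cs j)) ^ (M i j) = 1 := by
  set m := M i j with hm
  set a : W := cs.simple i * cs.simple j with ha
  have ham : a ^ m = 1 := cs.simple_mul_simple_pow i j
  set χ : W → ℕ → ZMod 2 :=
    fun t k => if t = (a⁻¹) ^ k * cs.simple j then 1 else 0 with hχ
  have hconjsig : ∀ X : W, cs.simple i * (cs.simple j * X * cs.simple j) * cs.simple i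
      = a * X * a⁻¹ := by
    intro X
    rw [ha, mul_inv_rev, cs.inv_simple, cs.inv_simple]
    group
  have key : ∀ (r : ℕ) (t : W) (e : ZMod 2),
      (((sig cs i) * (sig cs j)) ^ r) (t, e)
        = (a ^ r * t * (a ^ r)⁻¹, e + ∑ k ∈ Finset.range (2 * r), χ t k) := by
    intro r
    induction r with
    | zero => intro t e; simp
    | succ r ih =>
        intro t e
        rw [pow_succ', Equiv.Perm.mul_apply, ih, Equiv.Perm.mul_apply, sig_apply, sig_apply]
        have hc1 : (cs.simple j * (a ^ r * t * (a ^ r)⁻¹) * cs.simple j = cs.simple i)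
            ↔ t = (a⁻¹) ^ (2 * r + 1) * cs.simple j := by
          rw [simple_conj_eq_iff, conj_eq_iff, ha, conj_pow_sjsisj cs i j r]
        have hc2 : (a ^ r * t * (a ^ r)⁻¹ = cs.simple j)
            ↔ t = (a⁻¹) ^ (2 * r) * cs.simple j := by
          rw [conj_eq_iff, ha, conj_pow_sj cs i j r]
        refine Prod.ext ?_ ?_
        · show cs.simple i * (cs.simple j * (a ^ r * t * (a ^ r)⁻¹) * cs.simple j) * cs.simple i
            = a ^ (r + 1) * t * (a ^ (r + 1))⁻¹
          rw [hconjsig]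
          group
        · show e + (∑ k ∈ Finset.range (2 * r), χ t k)
              + (if a ^ r * t * (a ^ r)⁻¹ = cs.simple j then (1 : ZMod 2) else 0)
              + (if cs.simple j * (a ^ r * t * (a ^ r)⁻¹) * cs.simple j = cs.simple i
                  then (1 : ZMod 2) else 0)
            = e + ∑ k ∈ Finset.range (2 * (r + 1)), χ t k
          simp only [hc1, hc2]
          rw [show 2 * (r + 1) = (2 * r + 1) + 1 by ring, Finset.sum_range_succ,
            Finset.sum_range_succ]
          simp only [hχ]
          ring
  apply Equiv.ext
  rintro ⟨t, e⟩
  have hperiod : ∀ k, χ t (m + k) = χ t k := by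
    intro k
    simp only [hχ]
    rw [pow_add, show (a⁻¹) ^ m = 1 by rw [inv_pow, ham, inv_one], one_mul]
  have hsum : ∑ k ∈ Finset.range (2 * m), χ t k = 0 := by
    rw [two_mul, Finset.sum_range_add]
    simp only [hperiod]
    exact zmod2_add_self _
  rw [key m t e, ham, hsum]
  simp


lemma sig_liftable : M.IsLiftable (sig cs) := fun i j => sig_braid cs i j

/-- The sign representation `W →* Perm (W × ZMod 2)`. -/
noncomputable def psi : W →* Equiv.Perm (W × ZMod 2) :=
  cs.lift ⟨sig cs, sig_liftable cs⟩

lemma psi_simple (i : B) : psi cs (cs.simple i) = sig cs i :=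
  cs.lift_apply_simple (sig_liftable cs) i

lemma psi_fst (w t : W) (e : ZMod 2) : ((psi cs w) (t, e)).1 = w * t * w⁻¹ := by
  induction w using cs.simple_induction_left with
  | one => simp
  | mul_simple_left w i ih =>
      rw [map_mul, Equiv.Perm.mul_apply, psi_simple]
      rcases h : (psi cs w) (t, e) with ⟨x, c⟩
      have hx : x = w * t * w⁻¹ := by rw [← ih, h]
      rw [sig_apply, hx]
      simp only [mul_inv_rev, cs.inv_simple]
      group

lemma psi_snd_shift (w t : W) (e : ZMod 2) :
    ((psi cs w) (t, e)).2 = e + ((psi cs w) (t, 0)).2 := by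
  induction w using cs.simple_induction_left with
  | one => simp
  | mul_simple_left w i ih =>
      rw [map_mul, Equiv.Perm.mul_apply, Equiv.Perm.mul_apply, psi_simple]
      rcases h : (psi cs w) (t, e) with ⟨x, c⟩
      rcases h0 : (psi cs w) (t, 0) with ⟨x0, c0⟩
      have hx : x = x0 := by
        have h2 := (psi_fst cs w t e).trans (psi_fst cs w t 0).symm
        rw [h, h0] at h2
        exact h2
      have hc : c = e + c0 := by
        have h2 := ih
        rw [h, h0] at h2
        exact h2
      rw [sig_apply, sig_apply]
      simp only [hx, hc, add_assoc]

/-- The mod-2 inversion counting function. -/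
noncomputable def nn (w t : W) : ZMod 2 := ((psi cs w) (t, 0)).2

lemma psi_apply (w t : W) (e : ZMod 2) :
    (psi cs w) (t, e) = (w * t * w⁻¹, e + nn cs w t) := by
  refine Prod.ext ?_ ?_
  · exact psi_fst cs w t e
  · exact psi_snd_shift cs w t e

lemma nn_one (t : W) : nn cs 1 t = 0 := by simp [nn]

lemma nn_simple (i : B) (t : W) :
    nn cs (cs.simple i) t = if t = cs.simple i then 1 else 0 := by
  rw [nn, psi_simple, sig_apply, zero_add]

lemma nn_mul (u v t : W) : nn cs (u * v) t = nn cs v t + nn cs u (v * t * v⁻¹) := by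
  have h : (psi cs (u * v)) (t, 0) = (psi cs u) ((psi cs v) (t, 0)) := by
    rw [map_mul, Equiv.Perm.mul_apply]
  rw [nn, h, psi_apply cs v t 0, zero_add, psi_apply]

lemma nn_inv (u t : W) : nn cs u⁻¹ (u * t * u⁻¹) = nn cs u t := by
  have h := nn_mul cs u⁻¹ u t
  rw [inv_mul_cancel, nn_one] at h
  have h2 : ∀ x y : ZMod 2, 0 = x + y → y = x := by decide
  exact h2 _ _ h

lemma nn_reflection (t : W) (ht : cs.IsReflection t) : nn cs t t = 1 := by
  obtain ⟨w, i, rfl⟩ := ht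
  have e1 : nn cs (w * cs.simple i * w⁻¹) (w * cs.simple i * w⁻¹)
      = nn cs w⁻¹ (w * cs.simple i * w⁻¹)
        + nn cs (w * cs.simple i) (w⁻¹ * (w * cs.simple i * w⁻¹) * w⁻¹⁻¹) := by
    exact nn_mul cs (w * cs.simple i) w⁻¹ (w * cs.simple i * w⁻¹)
  have e2 : w⁻¹ * (w * cs.simple i * w⁻¹) * w⁻¹⁻¹ = cs.simple i := by group
  have e3 : nn cs (w * cs.simple i) (cs.simple i)
      = nn cs (cs.simple i) (cs.simple i)
        + nn cs w (cs.simple i * cs.simple i * (cs.simple i)⁻¹) := by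
    exact nn_mul cs w (cs.simple i) (cs.simple i)
  have e4 : cs.simple i * cs.simple i * (cs.simple i)⁻¹ = cs.simple i := by
    rw [cs.inv_simple, cs.simple_mul_simple_self, one_mul]
  have e5 : nn cs (cs.simple i) (cs.simple i) = 1 := by rw [nn_simple, if_pos rfl]
  have e6 : nn cs w⁻¹ (w * cs.simple i * w⁻¹) = nn cs w (cs.simple i) :=
    nn_inv cs w (cs.simple i)
  rw [e1, e2, e3, e4, e5, e6]
  have h2 : ∀ x : ZMod 2, x + (1 + x) = 1 := by decide
  exact h2 _

lemma nn_count (ω : List B) (t : W) :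
    nn cs (cs.wordProd ω) t = ((cs.rightInvSeq ω).count t : ZMod 2) := by
  induction ω with
  | nil => simp [nn_one]
  | cons i ω ih =>
      rw [cs.wordProd_cons, nn_mul, ih, nn_simple]
      have hris : cs.rightInvSeq (i :: ω)
          = ((cs.wordProd ω)⁻¹ * cs.simple i * cs.wordProd ω) :: cs.rightInvSeq ω := rfl
      rw [hris, List.count_cons]
      have hcond : ((cs.wordProd ω)⁻¹ * cs.simple i * cs.wordProd ω = t)
          ↔ (cs.wordProd ω * t * (cs.wordProd ω)⁻¹ = cs.simple i) := by
        constructor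
        · rintro rfl; group
        · intro h; rw [← h]; group
      simp only [beq_iff_eq, hcond]
      by_cases h : cs.wordProd ω * t * (cs.wordProd ω)⁻¹ = cs.simple i
      · rw [if_pos h, if_pos h]
        push_cast
        ring
      · rw [if_neg h, if_neg h]
        push_cast
        ring

lemma length_mul_lt_of_nn_one (w t : W) (h : nn cs w t = 1) :
    cs.length (w * t) < cs.length w := by
  obtain ⟨ω, hred, rfl⟩ := cs.exists_reduced_word' w
  have hc : ((cs.rightInvSeq ω).count t : ZMod 2) = 1 := by rw [← nn_count]; exact h
  have hmem : t ∈ cs.rightInvSeq ω := by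
    by_contra hmem
    rw [List.count_eq_zero_of_not_mem hmem] at hc
    simp at hc
  obtain ⟨n, hn, hget⟩ := List.mem_iff_getElem.mp hmem
  rw [cs.length_rightInvSeq] at hn
  have hgetD : (cs.rightInvSeq ω).getD n 1 = t := by
    rw [List.getD_eq_getElem _ _ (by rwa [cs.length_rightInvSeq])]
    exact hget
  have heq : cs.wordProd ω * t = cs.wordProd (ω.eraseIdx n) := by
    rw [← hgetD]
    exact cs.wordProd_mul_getD_rightInvSeq ω n
  have hlen : cs.length (cs.wordProd (ω.eraseIdx n)) ≤ (ω.eraseIdx n).length :=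
    cs.length_wordProd_le _
  have hlen2 : (ω.eraseIdx n).length + 1 = ω.length := List.length_eraseIdx_add_one hn
  rw [heq, hred]
  omega

lemma nn_one_of_length_mul_lt (w t : W) (ht : cs.IsReflection t)
    (h : cs.length (w * t) < cs.length w) : nn cs w t = 1 := by
  by_contra hc
  have h0 : nn cs w t = 0 := by
    have hz : ∀ x : ZMod 2, ¬x = 1 → x = 0 := by decide
    exact hz _ hc
  have h1 : nn cs (w * t) t = 1 := by
    rw [nn_mul, nn_reflection cs t ht,
      show t * t * t⁻¹ = t by rw [ht.mul_self, one_mul, ht.inv], h0, add_zero]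
  have h2 := length_mul_lt_of_nn_one cs (w * t) t h1
  rw [mul_assoc, ht.mul_self, mul_one] at h2
  omega


/-- The exchange property. -/
lemma exchange {w t : W} (ht : cs.IsReflection t) (h : cs.length (w * t) < cs.length w)
    {ω : List B} (hred : cs.IsReduced ω) (hw : w = cs.wordProd ω) :
    ∃ n, n < ω.length ∧ w * t = cs.wordProd (ω.eraseIdx n) := by
  have h1 : nn cs w t = 1 := nn_one_of_length_mul_lt cs w t ht h
  have hc : ((cs.rightInvSeq ω).count t : ZMod 2) = 1 := by
    rw [← nn_count, ← hw]; exact h1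
  have hmem : t ∈ cs.rightInvSeq ω := by
    by_contra hmem
    rw [List.count_eq_zero_of_not_mem hmem] at hc
    simp at hc
  obtain ⟨n, hn, hget⟩ := List.mem_iff_getElem.mp hmem
  rw [cs.length_rightInvSeq] at hn
  refine ⟨n, hn, ?_⟩
  have hgetD : (cs.rightInvSeq ω).getD n 1 = t := by
    rw [List.getD_eq_getElem _ _ (by rwa [cs.length_rightInvSeq])]
    exact hget
  rw [hw, ← hgetD]
  exact cs.wordProd_mul_getD_rightInvSeq ω n

/-- The diamond lemma: if `ℓ(s i * w) = ℓ(w * s j) = ℓ w + 1` and right multiplication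
by `s j` shortens `s i * w`, then `s i * w = w * s j`. -/
lemma diamond (i j : B) (w : W) (hiw : cs.length (cs.simple i * w) = cs.length w + 1)
    (hwj : cs.length (w * cs.simple j) = cs.length w + 1)
    (hd : cs.length (cs.simple i * w * cs.simple j) < cs.length (cs.simple i * w)) :
    cs.simple i * w = w * cs.simple j := by
  obtain ⟨ω, hred, hw⟩ := cs.exists_reduced_word' w
  have hred' : cs.IsReduced (i :: ω) := by
    unfold CoxeterSystem.IsReduced at hred ⊢
    rw [cs.wordProd_cons, ← hw, hiw, List.length_cons, ← hred, ← hw]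
  have hw' : cs.simple i * w = cs.wordProd (i :: ω) := by rw [cs.wordProd_cons, hw]
  obtain ⟨n, hn, heq⟩ := exchange cs (cs.isReflection_simple j) hd hred' hw'
  match n with
  | 0 =>
      rw [List.eraseIdx_cons_zero, ← hw] at heq
      calc cs.simple i * w = cs.simple i * w * cs.simple j * cs.simple j := by
            rw [cs.simple_mul_simple_cancel_right]
        _ = w * cs.simple j := by rw [heq]
  | (k + 1) =>
      exfalso
      rw [List.eraseIdx_cons_succ, cs.wordProd_cons, mul_assoc] at heq
      have heq2 : w * cs.simple j = cs.wordProd (ω.eraseIdx k) := mul_left_cancel heq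
      have hk : k < ω.length := by simpa using hn
      have hlen : cs.length (cs.wordProd (ω.eraseIdx k)) ≤ (ω.eraseIdx k).length :=
        cs.length_wordProd_le _
      have hlen2 : (ω.eraseIdx k).length + 1 = ω.length := List.length_eraseIdx_add_one hk
      have hlw : cs.length w = ω.length := by rw [hw, hred]
      rw [heq2] at hwj
      omega

/-! ### The 0-Hecke operators -/

/-- Left 0-Hecke operator. -/
noncomputable def fo (i : B) (x : W) : W :=
  if cs.length (cs.simple i * x) < cs.length x then x else cs.simple i * x

/-- Right 0-Hecke operator. -/
noncomputable def go (j : B) (x : W) : W :=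
  if cs.length (x * cs.simple j) < cs.length x then x else x * cs.simple j

lemma fo_go_comm (i j : B) (x : W) : fo cs i (go cs j x) = go cs j (fo cs i x) := by
  rcases cs.length_simple_mul x i with hi | hi
  · rcases cs.length_mul_simple x j with hj | hj
    · -- both lengthen
      have hgo : go cs j x = x * cs.simple j := by rw [go, if_neg (by omega)]
      have hfo : fo cs i x = cs.simple i * x := by rw [fo, if_neg (by omega)]
      rcases cs.length_mul_simple (cs.simple i * x) j with hd | hd
      · -- ℓ(s i * x * s j) = ℓ(s i * x) + 1
        have h1 : fo cs i (x * cs.simple j) = cs.simple i * (x * cs.simple j) := by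
          rw [fo, if_neg (by rw [← mul_assoc]; omega)]
        have h2 : go cs j (cs.simple i * x) = cs.simple i * x * cs.simple j := by
          rw [go, if_neg (by omega)]
        rw [hgo, hfo, h1, h2, mul_assoc]
      · -- ℓ(s i * x * s j) = ℓ x, diamond
        have hd' : cs.length (cs.simple i * x * cs.simple j) < cs.length (cs.simple i * x) := by
          omega
        have hdia := diamond cs i j x hi hj hd'
        have h1 : fo cs i (x * cs.simple j) = x * cs.simple j := by
          rw [fo, if_pos (by
            rw [← mul_assoc, hdia, cs.simple_mul_simple_cancel_right]; omega)]
        have h2 : go cs j (cs.simple i * x) = cs.simple i * x := by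
          rw [go, if_pos hd']
        rw [hgo, hfo, h1, h2, hdia]
    · -- s i lengthens, s j shortens
      have hgo : go cs j x = x := by rw [go, if_pos (by omega)]
      have hfo : fo cs i x = cs.simple i * x := by rw [fo, if_neg (by omega)]
      have hb : cs.length (cs.simple i * x * cs.simple j)
          ≤ cs.length (cs.simple i * x) + 1 := by
        have := cs.length_mul_le (cs.simple i * x) (cs.simple j)
        rwa [cs.length_simple] at this
      have hb2 : cs.length (cs.simple i * x * cs.simple j)
          ≤ 1 + cs.length (x * cs.simple j) := by
        have := cs.length_mul_le (cs.simple i) (x * cs.simple j)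
        rw [cs.length_simple, ← mul_assoc] at this
        exact this
      have h2 : go cs j (cs.simple i * x) = cs.simple i * x := by
        rw [go, if_pos (by omega)]
      rw [hgo, hfo, h2]
  · rcases cs.length_mul_simple x j with hj | hj
    · -- s i shortens, s j lengthens
      have hgo : go cs j x = x * cs.simple j := by rw [go, if_neg (by omega)]
      have hfo : fo cs i x = x := by rw [fo, if_pos (by omega)]
      have hb : cs.length (cs.simple i * (x * cs.simple j))
          ≤ cs.length (cs.simple i * x) + 1 := by
        have := cs.length_mul_le (cs.simple i * x) (cs.simple j)
        rw [cs.length_simple, mul_assoc] at this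
        exact this
      have h1 : fo cs i (x * cs.simple j) = x * cs.simple j := by
        rw [fo, if_pos (by omega)]
      rw [hgo, hfo, h1, hgo]
    · -- both shorten
      have hgo : go cs j x = x := by rw [go, if_pos (by omega)]
      have hfo : fo cs i x = x := by rw [fo, if_pos (by omega)]
      rw [hgo, hfo, hgo]

lemma fo_idem (i : B) (x : W) : fo cs i (fo cs i x) = fo cs i x := by
  by_cases h : cs.length (cs.simple i * x) < cs.length x
  · have hx : fo cs i x = x := by rw [fo, if_pos h]
    rw [hx, hx]
  · have hx : fo cs i x = cs.simple i * x := by rw [fo, if_neg h]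
    rw [hx, fo, if_pos]
    rw [cs.simple_mul_simple_cancel_left]
    rcases cs.length_simple_mul x i with hi | hi
    · omega
    · omega


/-- Composition of left 0-Hecke operators along a word. -/
noncomputable def Fo (ω : List B) (x : W) : W := ω.foldr (fo cs) x

/-- Composition of right 0-Hecke operators along a word. -/
noncomputable def Go (ω : List B) (x : W) : W := ω.foldl (fun y j => go cs j y) x

lemma Fo_nil (x : W) : Fo cs [] x = x := rfl

lemma Fo_cons (i : B) (ω : List B) (x : W) : Fo cs (i :: ω) x = fo cs i (Fo cs ω x) := rfl

lemma Fo_append (ω₁ ω₂ : List B) (x : W) : Fo cs (ω₁ ++ ω₂) x = Fo cs ω₁ (Fo cs ω₂ x) := by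
  simp [Fo, List.foldr_append]

lemma Go_nil (x : W) : Go cs [] x = x := rfl

lemma Go_cons (j : B) (ω : List B) (x : W) : Go cs (j :: ω) x = Go cs ω (go cs j x) := rfl

lemma Go_concat (ω : List B) (j : B) (x : W) :
    Go cs (ω ++ [j]) x = go cs j (Go cs ω x) := by
  simp [Go, List.foldl_append]

lemma fo_Go_comm (i : B) (ω : List B) (x : W) :
    fo cs i (Go cs ω x) = Go cs ω (fo cs i x) := by
  induction ω generalizing x with
  | nil => rfl
  | cons j ω ih =>
      rw [Go_cons, Go_cons, ih, fo_go_comm]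

lemma Fo_Go_comm (ωf ωg : List B) (x : W) :
    Fo cs ωf (Go cs ωg x) = Go cs ωg (Fo cs ωf x) := by
  induction ωf with
  | nil => rfl
  | cons i ωf ih =>
      rw [Fo_cons, Fo_cons, ih, fo_Go_comm]

lemma isReduced_tail {i : B} {ω : List B} (h : cs.IsReduced (i :: ω)) : cs.IsReduced ω := by
  unfold CoxeterSystem.IsReduced at h ⊢
  rw [cs.wordProd_cons] at h
  have h1 := cs.length_wordProd_le ω
  have h2 := cs.length_simple_mul (cs.wordProd ω) i
  rw [List.length_cons] at h
  omega

lemma Fo_one {ω : List B} (h : cs.IsReduced ω) : Fo cs ω 1 = cs.wordProd ω := by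
  induction ω with
  | nil => simp [Fo_nil]
  | cons i ω ih =>
      have hω := isReduced_tail cs h
      rw [Fo_cons, ih hω, cs.wordProd_cons]
      unfold CoxeterSystem.IsReduced at h hω
      rw [cs.wordProd_cons, List.length_cons] at h
      rw [fo, if_neg (by omega)]

lemma isReduced_dropLast {ω : List B} {j : B} (h : cs.IsReduced (ω ++ [j])) :
    cs.IsReduced ω := by
  unfold CoxeterSystem.IsReduced at h ⊢
  rw [cs.wordProd_append, cs.wordProd_singleton] at h
  have h1 := cs.length_wordProd_le ω
  have h2 := cs.length_mul_simple (cs.wordProd ω) j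
  rw [List.length_append, List.length_singleton] at h
  omega

lemma Go_one {ω : List B} (h : cs.IsReduced ω) : Go cs ω 1 = cs.wordProd ω := by
  induction ω using List.reverseRecOn with
  | nil => simp [Go_nil]
  | append_singleton ω j ih =>
      have hω := isReduced_dropLast cs h
      rw [Go_concat, ih hω, cs.wordProd_append, cs.wordProd_singleton]
      unfold CoxeterSystem.IsReduced at h hω
      rw [cs.wordProd_append, cs.wordProd_singleton, List.length_append,
        List.length_singleton] at h
      rw [go, if_neg (by omega)]

/-- A chosen reduced word for each element. -/
noncomputable def wrd (w : W) : List B := (cs.exists_reduced_word' w).choose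

lemma wrd_reduced (w : W) : cs.IsReduced (wrd cs w) :=
  (cs.exists_reduced_word' w).choose_spec.1

lemma wrd_prod (w : W) : cs.wordProd (wrd cs w) = w :=
  (cs.exists_reduced_word' w).choose_spec.2.symm

/-- The Demazure product. -/
noncomputable def Dz (w x : W) : W := Fo cs (wrd cs w) x

lemma Fo_eq_Go (ω : List B) (x : W) :
    Fo cs ω x = Go cs (wrd cs x) (Fo cs ω 1) := by
  conv_lhs => rw [show x = Go cs (wrd cs x) 1 by rw [Go_one cs (wrd_reduced cs x), wrd_prod]]
  rw [Fo_Go_comm]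

lemma Fo_eq_Dz {ω : List B} (h : cs.IsReduced ω) (x : W) :
    Fo cs ω x = Dz cs (cs.wordProd ω) x := by
  rw [Fo_eq_Go, Dz, Fo_eq_Go cs (wrd cs (cs.wordProd ω)) x,
    Fo_one cs h, Fo_one cs (wrd_reduced cs _), wrd_prod]

lemma Dz_one_left (x : W) : Dz cs 1 x = x := by
  have h : wrd cs 1 = [] := by
    have h1 := wrd_reduced cs 1
    have h2 := wrd_prod cs 1
    unfold CoxeterSystem.IsReduced at h1
    rw [h2, cs.length_one] at h1
    exact List.eq_nil_of_length_eq_zero h1.symm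
  rw [Dz, h, Fo_nil]

lemma descent_word {i : B} {w : W} (h : cs.length (cs.simple i * w) < cs.length w) :
    cs.IsReduced (i :: wrd cs (cs.simple i * w))
      ∧ cs.wordProd (i :: wrd cs (cs.simple i * w)) = w := by
  have hprod : cs.wordProd (i :: wrd cs (cs.simple i * w)) = w := by
    rw [cs.wordProd_cons, wrd_prod, cs.simple_mul_simple_cancel_left]
  constructor
  · unfold CoxeterSystem.IsReduced
    rw [hprod, List.length_cons]
    have h1 := wrd_reduced cs (cs.simple i * w)
    unfold CoxeterSystem.IsReduced at h1
    rw [wrd_prod] at h1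
    have h2 := cs.length_simple_mul w i
    omega
  · exact hprod


lemma key_lemma (ω : List B) (x : W) : Fo cs ω x = Dz cs (Fo cs ω 1) x := by
  induction ω with
  | nil => rw [Fo_nil, Fo_nil, Dz_one_left]
  | cons i ω ih =>
      rw [Fo_cons, Fo_cons, ih]
      set u := Fo cs ω 1 with hu
      rcases cs.length_simple_mul u i with h | h
      · -- lengthens : fo i u = s i * u
        have hfo : fo cs i u = cs.simple i * u := by rw [fo, if_neg (by omega)]
        have hred : cs.IsReduced (i :: wrd cs u) := by
          unfold CoxeterSystem.IsReduced
          rw [cs.wordProd_cons, wrd_prod, List.length_cons]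
          have h1 := wrd_reduced cs u
          unfold CoxeterSystem.IsReduced at h1
          rw [wrd_prod] at h1
          omega
        have hprod : cs.wordProd (i :: wrd cs u) = cs.simple i * u := by
          rw [cs.wordProd_cons, wrd_prod]
        have h1 : Fo cs (i :: wrd cs u) x = Dz cs (cs.simple i * u) x := by
          rw [Fo_eq_Dz cs hred, hprod]
        rw [hfo, ← h1, Fo_cons]
        rfl
      · -- shortens : fo i u = u and fo i fixes Dz u x
        have hlt : cs.length (cs.simple i * u) < cs.length u := by omega
        have hfo : fo cs i u = u := by rw [fo, if_pos hlt]
        obtain ⟨hred, hprod⟩ := descent_word cs hlt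
        rw [hfo]
        have hDz : Dz cs u x = fo cs i (Fo cs (wrd cs (cs.simple i * u)) x) := by
          rw [← Fo_cons, Fo_eq_Dz cs hred, hprod]
        rw [hDz, fo_idem]

lemma Dz_assoc (a b c : W) : Dz cs (Dz cs a b) c = Dz cs a (Dz cs b c) := by
  have hb : Fo cs (wrd cs b) 1 = b := by rw [Fo_one cs (wrd_reduced cs b), wrd_prod]
  have hab : Dz cs a b = Fo cs (wrd cs a ++ wrd cs b) 1 := by
    rw [Fo_append, hb]; rfl
  rw [hab, ← key_lemma]
  rw [Fo_append]
  rfl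

lemma Dz_add (w x : W) (h : cs.length (w * x) = cs.length w + cs.length x) :
    Dz cs w x = w * x := by
  have main : ∀ ω : List B, cs.IsReduced ω → ∀ x : W,
      cs.length (cs.wordProd ω * x) = ω.length + cs.length x →
        Fo cs ω x = cs.wordProd ω * x := by
    intro ω
    induction ω with
    | nil => intro _ x _; rw [Fo_nil, cs.wordProd_nil, one_mul]
    | cons i ω ih =>
        intro hred x hx
        have hω := isReduced_tail cs hred
        rw [cs.wordProd_cons, List.length_cons, mul_assoc] at hx
        have hle : cs.length (cs.wordProd ω * x) ≤ ω.length + cs.length x := by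
          have h1 := cs.length_mul_le (cs.wordProd ω) x
          have h2 := cs.length_wordProd_le ω
          omega
        have hge : ω.length + cs.length x ≤ cs.length (cs.wordProd ω * x) := by
          have h1 := cs.length_mul_le (cs.simple i) (cs.wordProd ω * x)
          rw [cs.length_simple] at h1
          omega
        have heq : cs.length (cs.wordProd ω * x) = ω.length + cs.length x := by omega
        rw [Fo_cons, ih hω x heq, cs.wordProd_cons, mul_assoc]
        rw [fo, if_neg (by omega)]
  have hl : cs.length (cs.wordProd (wrd cs w) * x) = (wrd cs w).length + cs.length x := by
    rw [wrd_prod, h]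
    have hred := wrd_reduced cs w
    unfold CoxeterSystem.IsReduced at hred
    rw [wrd_prod] at hred
    omega
  rw [Dz, main (wrd cs w) (wrd_reduced cs w) x hl, wrd_prod]

lemma Dz_simple (i : B) (x : W) : Dz cs (cs.simple i) x = fo cs i x := by
  have hred : cs.IsReduced [i] := by
    unfold CoxeterSystem.IsReduced
    rw [cs.wordProd_singleton, cs.length_simple, List.length_singleton]
  have := Fo_eq_Dz cs hred x
  rw [cs.wordProd_singleton] at this
  rw [← this, Fo_cons, Fo_nil]

lemma Dz_descent (i : B) (x : W) (h : cs.length (cs.simple i * x) < cs.length x) :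
    Dz cs (cs.simple i) x = x := by
  rw [Dz_simple, fo, if_pos h]

lemma Dz_descent_unfold (i : B) (w x : W) (h : cs.length (cs.simple i * w) < cs.length w) :
    Dz cs w x = fo cs i (Dz cs (cs.simple i * w) x) := by
  obtain ⟨hred, hprod⟩ := descent_word cs h
  have h1 : Fo cs (i :: wrd cs (cs.simple i * w)) x = Dz cs w x := by
    rw [Fo_eq_Dz cs hred, hprod]
  rw [← h1, Fo_cons]
  rfl


end DemazureAux

open DemazureAux

/-- The defining properties of the Demazure product on a Coxeter group:
an associative operation such that `w ∗ w' = w w'` when lengths add, and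
`s ∗ w = w` when `ℓ(s w) < ℓ(w)` for a simple reflection `s`. -/
def DemazureLike {B W : Type*} [Group W] {M : CoxeterMatrix B}
    (cs : CoxeterSystem M W) (star : W → W → W) : Prop :=
  (∀ a b c : W, star (star a b) c = star a (star b c)) ∧
  (∀ w w' : W, cs.length (w * w') = cs.length w + cs.length w' → star w w' = w * w') ∧
  (∀ (i : B) (w : W), cs.length (cs.simple i * w) < cs.length w → star (cs.simple i) w = w)

/-- There is a unique associative monoid operation on `W` (the Demazure product) such that
`w ∗ w' = w w'` whenever `ℓ(w w') = ℓ(w) + ℓ(w')`, and `s ∗ w = w` for any simple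
reflection `s` and `w` with `ℓ(s w) < ℓ(w)`. -/
theorem demazure_product_exists_unique {B W : Type*} [Group W] {M : CoxeterMatrix B}
    (cs : CoxeterSystem M W) :
    ∃! star : W → W → W, DemazureLike cs star := by
  refine ⟨Dz cs, ⟨Dz_assoc cs, Dz_add cs, Dz_descent cs⟩, ?_⟩
  intro star hstar
  obtain ⟨hassoc, hadd, hdesc⟩ := hstar
  have hstar_simple : ∀ (i : B) (x : W), star (cs.simple i) x = fo cs i x := by
    intro i x
    by_cases h : cs.length (cs.simple i * x) < cs.length x
    · rw [hdesc i x h, fo, if_pos h]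
    · have hx : cs.length (cs.simple i * x) = cs.length (cs.simple i) + cs.length x := by
        rcases cs.length_simple_mul x i with h1 | h1
        · rw [cs.length_simple]; omega
        · omega
      rw [hadd _ _ hx, fo, if_neg h]
  have main : ∀ n : ℕ, ∀ w x : W, cs.length w ≤ n → star w x = Dz cs w x := by
    intro n
    induction n with
    | zero =>
        intro w x hw
        have hw1 : w = 1 := by
          rw [← cs.length_eq_zero_iff]; omega
        subst hw1
        rw [Dz_one_left]
        have h1 : cs.length ((1 : W) * x) = cs.length 1 + cs.length x := by
          rw [one_mul, cs.length_one, zero_add]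
        rw [hadd _ _ h1, one_mul]
    | succ n ih =>
        intro w x hw
        by_cases hw1 : w = 1
        · subst hw1
          rw [Dz_one_left]
          have h1 : cs.length ((1 : W) * x) = cs.length 1 + cs.length x := by
            rw [one_mul, cs.length_one, zero_add]
          rw [hadd _ _ h1, one_mul]
        · obtain ⟨i, hi⟩ := cs.exists_leftDescent_of_ne_one hw1
          have hi' : cs.length (cs.simple i * w) < cs.length w := hi
          set v := cs.simple i * w with hv
          have hvlen : cs.length v ≤ n := by omega
          have hwv : cs.simple i * v = w := by
            rw [hv, cs.simple_mul_simple_cancel_left]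
          have hlen_siv : cs.length (cs.simple i * v) = cs.length (cs.simple i) + cs.length v := by
            rw [hwv, cs.length_simple]
            rcases cs.length_simple_mul w i with h1 | h1 <;>
              (rw [← hv] at h1; omega)
          have step1 : star w x = star (cs.simple i) (star v x) := by
            conv_lhs => rw [← hwv, ← hadd _ _ hlen_siv]
            rw [hassoc]
          rw [step1, ih v x hvlen, hstar_simple]
          rw [Dz_descent_unfold cs i w x hi']
  funext w x
  exact main (cs.length w) w x le_rfl
end

section
/- Let (W, S) be a Coxeter group with Demazure product ∗. For any w, w' ∈ W and simple reflection s with ℓ(s w) < ℓ(w), one has (s w) ∗ w' ∈ {w ∗ w', s(w ∗ w')}, and consequently ℓ(w ∗ w') − ℓ((s w) ∗ w') ∈ {0, 1}. -/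
/-- The Bruhat order on a Coxeter group, as the reflexive-transitive closure of
right multiplication by a reflection that increases length. -/
def BruhatLE {B W : Type*} [Group W] {M : CoxeterMatrix B}
    (cs : CoxeterSystem M W) : W → W → Prop :=
  Relation.ReflTransGen
    (fun a b => ∃ t : W, cs.IsReflection t ∧ b = a * t ∧ cs.length a < cs.length b)

/-- The `n`-th `σ`-twisted power `w σ(w) ⋯ σ^{n-1}(w)` (for `σ` given as a function). -/
def twistedPow {W : Type*} [Group W] (σ : W → W) (w : W) : ℕ → W
  | 0 => 1
  | n + 1 => twistedPow σ w n * σ^[n] w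

/-- The `n`-th `σ`-twisted Demazure power `w ∗ σ(w) ∗ ⋯ ∗ σ^{n-1}(w)`. -/
def twistedDemPow {W : Type*} [Group W] (star : W → W → W) (σ : W → W) (w : W) : ℕ → W
  | 0 => 1
  | n + 1 => star (twistedDemPow star σ w n) (σ^[n] w)

theorem demazure_simple_mul_left {B W : Type*} [Group W] {M : CoxeterMatrix B}
    (cs : CoxeterSystem M W) (star : W → W → W) (hstar : DemazureLike cs star)
    (i : B) (w w' : W) (hw : cs.length (cs.simple i * w) < cs.length w) :
    (star (cs.simple i * w) w' = star w w' ∨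
      star (cs.simple i * w) w' = cs.simple i * star w w') ∧
    cs.length (star (cs.simple i * w) w') ≤ cs.length (star w w') ∧
    cs.length (star w w') ≤ cs.length (star (cs.simple i * w) w') + 1 := by
  obtain ⟨hassoc, hadd, habs⟩ := hstar
  have hss : cs.simple i * (cs.simple i * w) = w := by
    rw [← mul_assoc, cs.simple_mul_simple_self, one_mul]
  have hsw : cs.length (cs.simple i * (cs.simple i * w))
      = cs.length (cs.simple i) + cs.length (cs.simple i * w) := by
    rcases cs.length_simple_mul w i with h | h
    · omega
    · rw [hss, cs.length_simple]; omega
  have key : star w w' = star (cs.simple i) (star (cs.simple i * w) w') := by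
    have h1 : star (cs.simple i) (cs.simple i * w) = w := by
      rw [hadd _ _ hsw, hss]
    calc star w w' = star (star (cs.simple i) (cs.simple i * w)) w' := by rw [h1]
      _ = _ := hassoc _ _ _
  set u := star (cs.simple i * w) w' with hu
  rcases lt_or_ge (cs.length (cs.simple i * u)) (cs.length u) with h | h
  · rw [key, habs _ _ h]
    exact ⟨Or.inl rfl, le_refl _, Nat.le_succ _⟩
  · have hlen : cs.length (cs.simple i * u) = cs.length u + 1 := by
      rcases cs.length_simple_mul u i with h' | h' <;> omega
    have h2 : star (cs.simple i) u = cs.simple i * u := by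
      apply hadd
      rw [cs.length_simple]; omega
    rw [key, h2]
    refine ⟨Or.inr ?_, by omega, by omega⟩
    rw [← mul_assoc, cs.simple_mul_simple_self, one_mul]
end

section
/- Let (W, S) be a Coxeter group with Demazure product ∗ and Bruhat order ≤. If x ≤ w and x' ≤ w' then x ∗ x' ≤ w ∗ w'. In particular, the Demazure product is monotone in both arguments with respect to the Bruhat order. -/
namespace DemProof

variable {B W : Type*} [Group W] {M : CoxeterMatrix B} (cs : CoxeterSystem M W)

local prefix:100 "ℓ" => cs.length
local prefix:100 "π" => cs.wordProd
local prefix:100 "σ" => cs.simple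
local prefix:100 "ris" => cs.rightInvSeq
local prefix:100 "lis" => cs.leftInvSeq

noncomputable section
local instance : DecidableEq W := Classical.decEq W

theorem le_step {w t : W} (ht : cs.IsReflection t) (h : ℓ w < ℓ (w * t)) :
    BruhatLE cs w (w * t) :=
  Relation.ReflTransGen.single ⟨t, ht, rfl, h⟩

theorem step_le {w t : W} (ht : cs.IsReflection t) (h : ℓ (w * t) < ℓ w) :
    BruhatLE cs (w * t) w := by
  have hw : w * t * t = w := by rw [mul_assoc, ht.mul_self, mul_one]
  exact Relation.ReflTransGen.single ⟨t, ht, hw.symm, h⟩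

theorem bruhat_trans {a b c : W} (h1 : BruhatLE cs a b) (h2 : BruhatLE cs b c) :
    BruhatLE cs a c := Relation.ReflTransGen.trans h1 h2

theorem bruhat_refl (a : W) : BruhatLE cs a a := Relation.ReflTransGen.refl

theorem length_le_of_bruhat {a b : W} (h : BruhatLE cs a b) : ℓ a ≤ ℓ b := by
  induction h with
  | refl => exact le_refl _
  | tail _ h ih => obtain ⟨t, _, rfl, hl⟩ := h; omega

theorem bruhat_inv {a b : W} (h : BruhatLE cs a b) : BruhatLE cs a⁻¹ b⁻¹ := by
  induction h with
  | refl => exact Relation.ReflTransGen.refl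
  | @tail b c _ h ih =>
      obtain ⟨t, ht, rfl, hl⟩ := h
      refine Relation.ReflTransGen.tail ih ⟨b * t * b⁻¹, ht.conj b, ?_, ?_⟩
      · rw [mul_inv_rev, ht.inv]; group
      · rwa [cs.length_inv, cs.length_inv]

open Multiplicative

/-- The group of parity functions. -/
abbrev ParN (W : Type*) := W → Multiplicative (ZMod 2)

variable (W) in
/-- Conjugation action of `W` on parity functions. -/
def parityAct : W →* MulAut (ParN W) where
  toFun w :=
    { toFun := fun f t => f (w⁻¹ * t * w)
      invFun := fun f t => f (w * t * w⁻¹)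
      left_inv := fun f => by funext t; group
      right_inv := fun f => by funext t; group
      map_mul' := fun f g => rfl }
  map_one' := by ext f t; simp
  map_mul' := fun u v => by ext f t; simp [mul_assoc]

theorem parityAct_apply (w : W) (f : ParN W) (t : W) :
    parityAct W w f t = f (w⁻¹ * t * w) := rfl

abbrev ParG (W : Type*) [Group W] := SemidirectProduct (ParN W) W (parityAct W)

/-- count as an element of ZMod 2 -/
def countFun (l : List W) : ParN W := fun t => ofAdd ((l.count t : ℕ) : ZMod 2)

omit [Group W] in
theorem countFun_nil : countFun ([] : List W) = 1 := by
  funext t; simp [countFun]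

theorem countFun_append (l l' : List W) :
    countFun (l ++ l') = countFun l * countFun l' := by
  funext t
  simp only [countFun, Pi.mul_apply, List.count_append, ← ofAdd_add]
  congr 1
  push_cast
  ring

theorem count_map_conj (g : W) (l : List W) (t : W) :
    (l.map (MulAut.conj g)).count t = l.count (g⁻¹ * t * g) := by
  have h1 : (MulAut.conj g).symm t = g⁻¹ * t * g := by
    simp [MulAut.conj]
  nth_rewrite 1 [← MulEquiv.apply_symm_apply (MulAut.conj g) t]
  rw [List.count_map_of_injective _ _ (MulAut.conj g).injective, h1]

def parityF : B → ParG W := fun i =>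
  ⟨fun t => ofAdd (if t = cs.simple i then 1 else 0), cs.simple i⟩

theorem countFun_cons_conj (i : B) (l : List W) :
    countFun (cs.simple i :: l.map (MulAut.conj (cs.simple i))) =
      (parityF cs i).left * parityAct W (cs.simple i) (countFun l) := by
  funext t
  show ofAdd ((((σ i :: l.map (MulAut.conj (σ i))).count t : ℕ)) : ZMod 2) =
    ofAdd ((if t = σ i then 1 else 0) + ((l.count ((σ i)⁻¹ * t * σ i) : ℕ) : ZMod 2))
  congr 1
  rw [List.count_cons, count_map_conj]
  push_cast
  rcases eq_or_ne t (σ i) with h | h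
  · simp [h]
    try ring
  · simp [h, Ne.symm h]
    try ring

theorem prod_map_parityF (ω : List B) :
    (ω.map (parityF cs)).prod = (⟨countFun (lis ω), π ω⟩ : ParG W) := by
  induction ω with
  | nil =>
      rw [List.map_nil, List.prod_nil, cs.leftInvSeq_nil, countFun_nil, cs.wordProd_nil]
      rfl
  | cons i ω ih =>
      rw [List.map_cons, List.prod_cons, ih, SemidirectProduct.mul_def]
      have h1 : countFun (lis (i :: ω)) =
          (parityF cs i).left * parityAct W (σ i) (countFun (lis ω)) := by
        rw [show lis (i :: ω) = σ i :: (lis ω).map (MulAut.conj (σ i)) from rfl,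
          countFun_cons_conj]
      rw [h1, cs.wordProd_cons]
      rfl



section Liftable

open Multiplicative

theorem alt_two_mul_succ (i j : B) (m : ℕ) :
    CoxeterSystem.alternatingWord i j (2 * (m + 1)) =
      i :: j :: CoxeterSystem.alternatingWord i j (2 * m) := by
  have h1 : 2 * (m + 1) = (2 * m + 1) + 1 := by ring
  rw [h1, CoxeterSystem.alternatingWord_succ', CoxeterSystem.alternatingWord_succ']
  simp [Nat.even_add_one, Nat.not_even_iff_odd, parity_simps]

theorem lis_alt (i j : B) (m : ℕ) :
    lis (CoxeterSystem.alternatingWord i j (2 * m)) =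
      (List.range (2 * m)).map (fun k => (σ i * σ j) ^ k * σ i) := by
  induction m with
  | zero => simp [CoxeterSystem.alternatingWord]
  | succ m ih =>
      rw [alt_two_mul_succ]
      rw [show lis (i :: j :: CoxeterSystem.alternatingWord i j (2*m)) =
        σ i :: (σ j :: (lis (CoxeterSystem.alternatingWord i j (2*m))).map
          (MulAut.conj (σ j))).map (MulAut.conj (σ i)) from rfl]
      rw [ih]
      have h2 : 2 * (m + 1) = (2 * m) + 1 + 1 := by ring
      rw [h2, List.range_succ_eq_map, List.range_succ_eq_map]
      simp only [List.map_cons, List.map_map]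
      congr 1
      · simp [pow_zero]
      congr 1
      · simp only [Function.comp_apply, Nat.succ_eq_add_one, pow_one, MulAut.conj_apply,
          cs.inv_simple]
        rw [zero_add, pow_one]
      · apply List.map_congr_left
        intro k _
        simp only [Function.comp_apply, MulAut.conj_apply, cs.inv_simple,
          Nat.succ_eq_add_one]
        calc σ i * (σ j * ((σ i * σ j) ^ k * σ i) * σ j) * σ i
            = (σ i * σ j) * (((σ i * σ j) ^ k * (σ i * σ j)) * σ i) := by group
          _ = (σ i * σ j) * ((σ i * σ j) ^ (k + 1) * σ i) := by rw [← pow_succ]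
          _ = (σ i * σ j) ^ (k + 1 + 1) * σ i := by rw [pow_succ']; group

theorem mul_self_eq_one_parN (f : ParN W) : f * f = 1 := by
  funext t
  show f t * f t = 1
  rw [← ofAdd_toAdd (f t), ← ofAdd_add]
  rw [show toAdd (f t) + toAdd (f t) = 0 from CharTwo.add_self_eq_zero _]
  rfl

theorem countFun_lis_alt (i j : B) :
    countFun (lis (CoxeterSystem.alternatingWord i j (2 * M i j))) = 1 := by
  rw [lis_alt]
  set m := M i j with hm
  have hr : (σ i * σ j) ^ m = 1 := cs.simple_mul_simple_pow i j
  have h2 : 2 * m = m + m := by ring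
  rw [h2, List.range_add, List.map_append]
  have h3 : ((List.range m).map (m + ·)).map (fun k => (σ i * σ j) ^ k * σ i) =
      (List.range m).map (fun k => (σ i * σ j) ^ k * σ i) := by
    rw [List.map_map]
    apply List.map_congr_left
    intro k _
    simp only [Function.comp_apply]
    rw [pow_add, hr, one_mul]
  rw [h3, countFun_append, mul_self_eq_one_parN]

theorem parity_liftable : CoxeterMatrix.IsLiftable M (parityF cs) := by
  intro i j
  have h1 : (parityF cs i * parityF cs j) ^ M i j =
      ((CoxeterSystem.alternatingWord i j (2 * M i j)).map (parityF cs)).prod := by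
    induction (M i j) with
    | zero => simp [CoxeterSystem.alternatingWord]
    | succ m ih => rw [alt_two_mul_succ, List.map_cons, List.map_cons, List.prod_cons,
        List.prod_cons, ← ih, pow_succ', mul_assoc]
  rw [h1, prod_map_parityF, countFun_lis_alt]
  have h4 : π (CoxeterSystem.alternatingWord i j (2 * M i j)) = 1 := by
    have := cs.prod_alternatingWord_eq_mul_pow i j (2 * M i j)
    simp only [Nat.mul_div_cancel_left, even_two, Even.mul_right, if_pos] at this
    rw [this, Nat.mul_div_cancel_left _ (by norm_num), one_mul,
      cs.simple_mul_simple_pow]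
  rw [h4]
  rfl

def parityHom : W →* ParG W := cs.lift ⟨parityF cs, parity_liftable cs⟩

theorem parityHom_wordProd (ω : List B) :
    parityHom cs (π ω) = ⟨countFun (lis ω), π ω⟩ := by
  rw [← prod_map_parityF, CoxeterSystem.wordProd, MonoidHom.map_list_prod, List.map_map]
  congr 1
  apply List.map_congr_left
  intro k _
  simp only [Function.comp_apply]
  exact cs.lift_apply_simple (parity_liftable cs) k

theorem countFun_lis_congr {ω ω' : List B} (h : π ω = π ω') :
    countFun (lis ω) = countFun (lis ω') := by
  have := congrArg (fun z => SemidirectProduct.left z)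
    ((parityHom_wordProd cs ω).symm.trans (by rw [h, parityHom_wordProd]))
  exact this

end Liftable

section StrongExchange

open Multiplicative

theorem lis_append (ω ω' : List B) :
    lis (ω ++ ω') = lis ω ++ (lis ω').map (MulAut.conj (π ω)) := by
  induction ω with
  | nil =>
      simp [cs.wordProd_nil]
  | cons i ω ih =>
      rw [List.cons_append,
        show lis (i :: (ω ++ ω')) = σ i :: (lis (ω ++ ω')).map (MulAut.conj (σ i)) from rfl,
        ih, List.map_append,
        show lis (i :: ω) = σ i :: (lis ω).map (MulAut.conj (σ i)) from rfl]
      rw [List.map_map, cs.wordProd_cons, List.cons_append]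
      congr 2
      apply List.map_congr_left
      intro x _
      simp [MulAut.conj_apply, mul_inv_rev, mul_assoc]

theorem count_pal (γ : List B) (i : B) :
    ((List.count (π γ * σ i * (π γ)⁻¹) (lis (γ ++ i :: γ.reverse)) : ℕ) : ZMod 2) = 1 := by
  induction γ with
  | nil =>
      rw [cs.wordProd_nil]
      rw [show ([] ++ i :: List.reverse []) = [i] by simp]
      rw [show lis [i] = [σ i] from rfl]
      simp
  | cons j γ ih =>
      set a := π γ * σ i * (π γ)⁻¹ with ha
      have hpal : π (γ ++ i :: γ.reverse) = a := by
        rw [cs.wordProd_append, cs.wordProd_cons, cs.wordProd_reverse, ha, mul_assoc]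
      have hword : (j :: γ) ++ i :: (j :: γ).reverse =
          j :: ((γ ++ i :: γ.reverse) ++ [j]) := by
        simp
      rw [hword]
      have hL : lis (j :: ((γ ++ i :: γ.reverse) ++ [j])) =
          σ j :: ((lis (γ ++ i :: γ.reverse)).map (MulAut.conj (σ j)) ++
            [MulAut.conj (σ j) (MulAut.conj a (σ j))]) := by
        rw [show ∀ θ : List B, lis (j :: θ) = σ j :: (lis θ).map (MulAut.conj (σ j))
          from fun _ => rfl]
        rw [lis_append, List.map_append]
        congr 2
        rw [show lis [j] = [σ j] from rfl]
        rw [hpal]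
        rfl
      have hts : π (j :: γ) * σ i * (π (j :: γ))⁻¹ = σ j * a * σ j := by
        rw [cs.wordProd_cons, ha, mul_inv_rev, cs.inv_simple]
        group
      have h2 : MulAut.conj (σ j) (MulAut.conj a (σ j)) = σ j * (a * σ j * a⁻¹) * σ j := by
        simp only [MulAut.conj_apply, cs.inv_simple]
      rw [hts, hL, h2]
      rw [List.count_cons, List.count_append, count_map_conj]
      have h1 : (σ j)⁻¹ * (σ j * a * σ j) * σ j = a := by
        rw [cs.inv_simple]
        calc σ j * (σ j * a * σ j) * σ j = (σ j * σ j) * a * (σ j * σ j) := by group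
          _ = a := by rw [cs.simple_mul_simple_self]; group
      rw [h1]
      by_cases haj : a = σ j
      · have e1 : σ j * a * σ j = σ j := by
          rw [haj, cs.simple_mul_simple_self, one_mul]
        have e2 : σ j * (a * σ j * a⁻¹) * σ j = σ j := by
          rw [haj]
          calc σ j * (σ j * σ j * (σ j)⁻¹) * σ j = σ j * σ j * σ j * ((σ j)⁻¹ * σ j) := by
                group
            _ = σ j := by rw [cs.simple_mul_simple_self, inv_mul_cancel, one_mul, mul_one]
        rw [e1, e2]
        simp only [List.count_singleton]
        push_cast
        rw [ih]
        simp only [beq_self_eq_true, if_true]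
        ring_nf
        decide
      · have e1 : σ j * a * σ j ≠ σ j := by
          intro h
          apply haj
          have h' : σ j * (a * σ j) = σ j * 1 := by rw [← mul_assoc, h, mul_one]
          have := mul_left_cancel h'
          calc a = a * σ j * σ j := by rw [mul_assoc, cs.simple_mul_simple_self, mul_one]
            _ = σ j := by rw [this, one_mul]
        have e2 : σ j * a * σ j ≠ σ j * (a * σ j * a⁻¹) * σ j := by
          intro h
          apply haj
          have h4 : σ j * a = σ j * (a * σ j * a⁻¹) := mul_right_cancel h
          have h5 : a = a * σ j * a⁻¹ := mul_left_cancel h4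
          have h6 : a * a = a * σ j := by
            calc a * a = (a * σ j * a⁻¹) * a := by rw [← h5]
              _ = a * σ j := by group
          exact mul_left_cancel h6
        have c0 : (σ j * a * σ j) ∉ [σ j * (a * σ j * a⁻¹) * σ j] := by
          simp only [List.mem_singleton]
          exact e2
        rw [List.count_eq_zero_of_not_mem c0]
        rw [if_neg (show ¬((σ j == σ j * a * σ j) = true) by
          simp only [beq_iff_eq]
          exact fun h => e1 h.symm)]
        simpa using ih

end StrongExchange

theorem exists_pal_word {t : W} (ht : cs.IsReflection t) :
    ∃ α : List B, π α = t ∧ ((List.count t (lis α) : ℕ) : ZMod 2) = 1 := by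
  obtain ⟨u, i, rfl⟩ := ht
  obtain ⟨γ, hγ⟩ := cs.wordProd_surjective u
  refine ⟨γ ++ i :: γ.reverse, ?_, ?_⟩
  · rw [cs.wordProd_append, cs.wordProd_cons, cs.wordProd_reverse, hγ, mul_assoc]
  · rw [← hγ]
    exact count_pal cs γ i

theorem count_congr_of_wordProd_eq {ω ω' : List B} (h : π ω = π ω') (t : W) :
    ((List.count t (lis ω) : ℕ) : ZMod 2) = ((List.count t (lis ω') : ℕ) : ZMod 2) := by
  have := congrFun (countFun_lis_congr cs h) t
  simpa [countFun, Multiplicative.ofAdd] using this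

theorem mem_leftInvSeq_of_isLeftInversion {ω : List B} (hred : cs.IsReduced ω) {t : W}
    (ht : cs.IsLeftInversion (π ω) t) : t ∈ lis ω := by
  obtain ⟨htr, hlen⟩ := ht
  obtain ⟨α, hα, hcount⟩ := exists_pal_word cs htr
  obtain ⟨θ, hθred, hθ⟩ := cs.exists_reduced_word' (t * π ω)
  have hprod : π (α ++ θ) = π ω := by
    rw [cs.wordProd_append, hα, ← hθ, ← mul_assoc, htr.mul_self, one_mul]
  have hodd := count_congr_of_wordProd_eq cs hprod.symm t
  rw [lis_append, List.count_append, count_map_conj, hα] at hodd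
  have hnot : t ∉ lis θ := by
    intro hmem
    have := cs.isLeftInversion_of_mem_leftInvSeq hθred hmem
    rw [← hθ] at this
    obtain ⟨_, hlt⟩ := this
    rw [← mul_assoc, htr.mul_self, one_mul] at hlt
    omega
  have hz : List.count (t⁻¹ * t * t) (lis θ) = 0 := by
    rw [inv_mul_cancel, one_mul]
    exact List.count_eq_zero_of_not_mem hnot
  rw [hz] at hodd
  have h1 : ((List.count t (lis ω) : ℕ) : ZMod 2) = 1 := by
    rw [hodd, Nat.add_zero, hcount]
  by_contra hmem
  rw [List.count_eq_zero_of_not_mem hmem] at h1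
  simp at h1

theorem mem_rightInvSeq_of_isRightInversion {ω : List B} (hred : cs.IsReduced ω) {t : W}
    (ht : cs.IsRightInversion (π ω) t) : t ∈ ris ω := by
  have hred' : cs.IsReduced ω.reverse := (cs.isReduced_reverse_iff ω).mpr hred
  have hl : cs.IsLeftInversion (π ω.reverse) t := by
    rw [cs.wordProd_reverse]
    exact (cs.isLeftInversion_inv_iff).mpr ht
  have := mem_leftInvSeq_of_isLeftInversion cs hred' hl
  rw [cs.leftInvSeq_reverse] at this
  exact (List.mem_reverse).mp this

theorem strong_exchange {ω : List B} (hred : cs.IsReduced ω) {t : W}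
    (ht : cs.IsRightInversion (π ω) t) :
    ∃ j, j < ω.length ∧ t = (ris ω).getD j 1 := by
  have hmem := mem_rightInvSeq_of_isRightInversion cs hred ht
  obtain ⟨j, hj, hval⟩ := List.mem_iff_getElem.mp hmem
  rw [cs.length_rightInvSeq] at hj
  exact ⟨j, hj, by rw [← hval, List.getD_eq_getElem _ 1 (by rw [cs.length_rightInvSeq]; exact hj)]⟩

section BruhatZ

theorem length_mul_simple_down {w : W} {i : B} (h : ℓ (w * σ i) < ℓ w) :
    ℓ (w * σ i) = ℓ w - 1 ∧ 1 ≤ ℓ w := by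
  rcases cs.length_mul_simple w i with h1 | h1 <;> omega

/-- The key claim, proven with strong exchange. -/
theorem claim_vs_le {v w t : W} (ht : cs.IsReflection t) (hv : v = w * t)
    (hlv : ℓ v < ℓ w) (i : B) (hws : ℓ (w * σ i) < ℓ w) :
    BruhatLE cs (v * σ i) w := by
  obtain ⟨ω₁, hω₁red, hω₁⟩ := cs.exists_reduced_word' (w * σ i)
  have hlen1 : ω₁.length = ℓ (w * σ i) := by rw [hω₁]; exact hω₁red.symm
  set ω : List B := ω₁ ++ [i] with hω
  have hπω : π ω = w := by
    rw [hω, cs.wordProd_append, ← hω₁]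
    rw [show π [i] = σ i from by simp [cs.wordProd_cons, cs.wordProd_nil]]
    rw [mul_assoc, cs.simple_mul_simple_self, mul_one]
  have hlw : ℓ (w * σ i) = ℓ w - 1 ∧ 1 ≤ ℓ w := length_mul_simple_down cs hws
  have hωred : cs.IsReduced ω := by
    unfold CoxeterSystem.IsReduced
    rw [hπω, hω, List.length_append, List.length_singleton, hlen1]
    omega
  have hinv : cs.IsRightInversion (π ω) t := by
    refine ⟨ht, ?_⟩
    rw [hπω, ← hv]
    exact hlv
  obtain ⟨j, hj, htj⟩ := strong_exchange cs hωred hinv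
  have hvπ : v = π (ω.eraseIdx j) := by
    rw [hv, ← hπω, htj, cs.wordProd_mul_getD_rightInvSeq]
  have hjlen : j < ω₁.length + 1 := by
    rw [hω, List.length_append, List.length_singleton] at hj
    omega
  rcases Nat.lt_or_ge j ω₁.length with hcase | hcase
  · -- j < ω₁.length
    have herase : ω.eraseIdx j = ω₁.eraseIdx j ++ [i] :=
      List.eraseIdx_append_of_lt_length hcase [i]
    have hz : v = π (ω₁.eraseIdx j) * σ i := by
      rw [hvπ, herase, cs.wordProd_append]
      rw [show π [i] = σ i from by simp [cs.wordProd_cons, cs.wordProd_nil]]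
    have hvsz : v * σ i = π (ω₁.eraseIdx j) := by
      rw [hz, mul_assoc, cs.simple_mul_simple_self, mul_one]
    -- z = (w * σ i) * r for a reflection r
    set r : W := (ris ω₁).getD j 1 with hr
    have hzr : π (ω₁.eraseIdx j) = (w * σ i) * r := by
      rw [hω₁, hr, cs.wordProd_mul_getD_rightInvSeq]
    have hrrefl : cs.IsReflection r := by
      have hmem : r ∈ ris ω₁ := by
        rw [hr, List.getD_eq_getElem _ 1 (by rw [cs.length_rightInvSeq]; exact hcase)]
        exact List.getElem_mem _
      exact cs.isReflection_of_mem_rightInvSeq ω₁ hmem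
    have hzlen : ℓ (π (ω₁.eraseIdx j)) < ℓ (w * σ i) := by
      calc ℓ (π (ω₁.eraseIdx j)) ≤ (ω₁.eraseIdx j).length := cs.length_wordProd_le _
        _ = ω₁.length - 1 := by rw [List.length_eraseIdx]; simp [hcase]
        _ < ω₁.length := by
            have : 0 < ω₁.length := by
              rcases Nat.eq_zero_or_pos ω₁.length with h0 | h0
              · exfalso; omega
              · exact h0
            omega
        _ = ℓ (w * σ i) := hlen1
    have step1 : BruhatLE cs (π (ω₁.eraseIdx j)) (w * σ i) := by
      have := step_le cs (w := w * σ i) (t := r) hrrefl (by rw [← hzr]; exact hzlen)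
      rwa [← hzr] at this
    have step2 : BruhatLE cs (w * σ i) w := step_le cs (cs.isReflection_simple i) hws
    rw [hvsz]
    exact bruhat_trans cs step1 step2
  · -- j = ω₁.length : v = w * σ i
    have hjeq : j = ω₁.length := by omega
    have herase : ω.eraseIdx j = ω₁ := by
      rw [hω, hjeq, List.eraseIdx_append_of_length_le (le_refl _)]
      simp
    have hveq : v = w * σ i := by rw [hvπ, herase, ← hω₁]
    rw [hveq, mul_assoc, cs.simple_mul_simple_self, mul_one]
    exact bruhat_refl cs w

end BruhatZ

section Zprop

theorem propZ (i : B) {u w : W} (h : BruhatLE cs u w) :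
    BruhatLE cs (u * σ i) w ∨ BruhatLE cs (u * σ i) (w * σ i) := by
  induction h with
  | refl => right; exact bruhat_refl cs _
  | @tail v w' hv hstep ih =>
      obtain ⟨t, ht, rfl, hl⟩ := hstep
      have hstep' : BruhatLE cs v (v * t) := Relation.ReflTransGen.single ⟨t, ht, rfl, hl⟩
      rcases ih with h1 | h1
      · left; exact bruhat_trans cs h1 hstep'
      · rcases Nat.lt_or_ge (ℓ (v * σ i)) (ℓ v) with hvs | hvs
        · -- v * σ i < v ≤ v * t
          left
          refine bruhat_trans cs h1 (bruhat_trans cs ?_ hstep')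
          exact step_le cs (cs.isReflection_simple i) hvs
        · have hvs' : ℓ v < ℓ (v * σ i) :=
            lt_of_le_of_ne hvs (fun hh => cs.length_mul_simple_ne v i hh.symm)
          rcases Nat.lt_or_ge (ℓ (v * t * σ i)) (ℓ (v * t)) with hws | hws
          · -- use the claim
            left
            have hveq : v = (v * t) * t := by
              rw [mul_assoc, ht.mul_self, mul_one]
            exact bruhat_trans cs h1 (claim_vs_le cs ht hveq hl i hws)
          · -- v * σ i ≤ v * t * σ i by a single step
            right
            have hws' : ℓ (v * t) < ℓ (v * t * σ i) :=
              lt_of_le_of_ne hws (fun hh => cs.length_mul_simple_ne (v * t) i hh.symm)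
            have hlen : ℓ (v * σ i) < ℓ (v * t * σ i) := by
              have h2 : ℓ (v * σ i) = ℓ v + 1 := by
                rcases cs.length_mul_simple v i with hh | hh <;> omega
              omega
            have hconj : cs.IsReflection (σ i * t * σ i) := by
              have := ht.conj (σ i)
              rwa [cs.inv_simple] at this
            have hprod : v * t * σ i = (v * σ i) * (σ i * t * σ i) := by
              rw [show (v * σ i) * (σ i * t * σ i) = v * (σ i * σ i) * t * σ i by group]
              rw [cs.simple_mul_simple_self, mul_one]
            refine bruhat_trans cs h1 (Relation.ReflTransGen.single
              ⟨σ i * t * σ i, hconj, hprod, hlen⟩)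

/-- The "right max" operator. -/
def maxR (i : B) (x : W) : W := if ℓ (x * σ i) < ℓ x then x else x * σ i

theorem le_maxR (i : B) (x : W) : BruhatLE cs x (maxR cs i x) := by
  unfold maxR
  split
  · exact bruhat_refl cs x
  · next hh =>
      refine le_step cs (cs.isReflection_simple i) ?_
      exact lt_of_le_of_ne (Nat.le_of_not_lt hh)
        (fun h2 => cs.length_mul_simple_ne x i h2.symm)

theorem maxR_le (i : B) {x y : W} (hx : BruhatLE cs x y) (hxs : BruhatLE cs (x * σ i) y) :
    BruhatLE cs (maxR cs i x) y := by
  unfold maxR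
  split
  · exact hx
  · exact hxs

theorem maxR_mono (i : B) {u w : W} (h : BruhatLE cs u w) :
    BruhatLE cs (maxR cs i u) (maxR cs i w) := by
  have hus : BruhatLE cs (u * σ i) (maxR cs i w) := by
    rcases propZ cs i h with h1 | h1
    · exact bruhat_trans cs h1 (le_maxR cs i w)
    · unfold maxR
      split
      · next hh =>
          exact bruhat_trans cs h1 (step_le cs (cs.isReflection_simple i) hh)
      · exact h1
  exact maxR_le cs i (bruhat_trans cs h (le_maxR cs i w)) hus

/-- The "left max" operator. -/
def maxL (i : B) (x : W) : W := if ℓ (σ i * x) < ℓ x then x else σ i * x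

theorem maxL_eq_inv_maxR (i : B) (x : W) : maxL cs i x = (maxR cs i x⁻¹)⁻¹ := by
  unfold maxL maxR
  have hli : ℓ (x⁻¹ * σ i) = ℓ (σ i * x) := by
    rw [← cs.length_inv (x⁻¹ * σ i), mul_inv_rev, cs.inv_simple, inv_inv]
  rw [hli, cs.length_inv x]
  split
  · rw [inv_inv]
  · rw [mul_inv_rev, cs.inv_simple, inv_inv]

theorem maxL_mono (i : B) {u w : W} (h : BruhatLE cs u w) :
    BruhatLE cs (maxL cs i u) (maxL cs i w) := by
  rw [maxL_eq_inv_maxR, maxL_eq_inv_maxR]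
  exact bruhat_inv cs (maxR_mono cs i (bruhat_inv cs h))

end Zprop

section Star

variable {star : W → W → W}

theorem star_one_left (hstar : DemazureLike cs star) (u : W) : star 1 u = u := by
  rw [hstar.2.1 1 u (by rw [one_mul, cs.length_one, zero_add]), one_mul]

theorem star_one_right (hstar : DemazureLike cs star) (u : W) : star u 1 = u := by
  rw [hstar.2.1 u 1 (by rw [mul_one, cs.length_one, add_zero]), mul_one]

theorem star_simple_left (hstar : DemazureLike cs star) (i : B) (z : W) :
    star (σ i) z = maxL cs i z := by
  unfold maxL
  split
  · next hh => exact hstar.2.2 i z hh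
  · next hh =>
      apply hstar.2.1
      rw [cs.length_simple]
      rcases cs.length_simple_mul z i with h | h <;> omega

theorem star_simple_simple (hstar : DemazureLike cs star) (j : B) :
    star (σ j) (σ j) = σ j := by
  apply hstar.2.2
  rw [cs.simple_mul_simple_self, cs.length_one, cs.length_simple]
  omega

theorem star_simple_right (hstar : DemazureLike cs star) (j : B) (z : W) :
    star z (σ j) = maxR cs j z := by
  unfold maxR
  split
  · next hh =>
      set v := z * σ j with hv
      have hz : z = v * σ j := by
        rw [hv, mul_assoc, cs.simple_mul_simple_self, mul_one]
      have hlen : ℓ (v * σ j) = ℓ v + ℓ (σ j) := by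
        rw [cs.length_simple, ← hz]
        have h2 := cs.length_mul_simple z j
        rw [← hv] at h2
        have h3 := cs.length_mul_simple_ne z j
        rw [← hv] at h3
        rcases h2 with h | h <;> omega
      have h1 : v * σ j = star v (σ j) := (hstar.2.1 v (σ j) hlen).symm
      calc star z (σ j) = star (star v (σ j)) (σ j) := by rw [← h1, ← hz]
        _ = star v (star (σ j) (σ j)) := hstar.1 v (σ j) (σ j)
        _ = star v (σ j) := by rw [star_simple_simple cs hstar j]
        _ = z := by rw [← h1, ← hz]
  · next hh =>
      apply hstar.2.1
      rw [cs.length_simple]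
      rcases cs.length_mul_simple z j with h | h <;> omega

theorem star_cons_left (hstar : DemazureLike cs star) (i : B) (v u : W)
    (hlv : ℓ (σ i * v) = ℓ v + 1) : star (σ i * v) u = star (σ i) (star v u) := by
  rw [show σ i * v = star (σ i) v from
    (hstar.2.1 (σ i) v (by rw [cs.length_simple]; omega)).symm]
  exact hstar.1 (σ i) v u

theorem star_concat_right (hstar : DemazureLike cs star) (j : B) (v u : W)
    (hlv : ℓ (v * σ j) = ℓ v + 1) : star u (v * σ j) = star (star u v) (σ j) := by
  rw [show v * σ j = star v (σ j) from
    (hstar.2.1 v (σ j) (by rw [cs.length_simple]; omega)).symm]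
  exact (hstar.1 u v (σ j)).symm

theorem star_mono_right (hstar : DemazureLike cs star) {u u' : W}
    (h : BruhatLE cs u u') (w : W) : BruhatLE cs (star w u) (star w u') := by
  generalize hn : ℓ w = n
  induction n using Nat.strong_induction_on generalizing w with
  | _ n ih =>
      by_cases hw : w = 1
      · subst hw
        rw [star_one_left cs hstar, star_one_left cs hstar]
        exact h
      · obtain ⟨i, hi⟩ := cs.exists_leftDescent_of_ne_one hw
        have hi' : ℓ (σ i * w) < ℓ w := hi
        set v := σ i * w with hv
        have hwv : w = σ i * v := by
          rw [hv, ← mul_assoc, cs.simple_mul_simple_self, one_mul]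
        have hlv : ℓ (σ i * v) = ℓ v + 1 := by
          rw [← hwv]
          have h2 := cs.length_simple_mul w i
          rw [← hv] at h2
          rcases h2 with h2 | h2 <;> omega
        have hvlt : ℓ v < n := by rw [← hn, hv]; exact hi'
        have h1 := ih (ℓ v) hvlt v rfl
        rw [hwv, star_cons_left cs hstar i v u hlv, star_cons_left cs hstar i v u' hlv,
          star_simple_left cs hstar, star_simple_left cs hstar]
        exact maxL_mono cs i h1

theorem star_mono_left (hstar : DemazureLike cs star) {x w : W}
    (h : BruhatLE cs x w) (u : W) : BruhatLE cs (star x u) (star w u) := by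
  generalize hn : ℓ u = n
  induction n using Nat.strong_induction_on generalizing u with
  | _ n ih =>
      by_cases hu : u = 1
      · subst hu
        rw [star_one_right cs hstar, star_one_right cs hstar]
        exact h
      · obtain ⟨j, hj⟩ := cs.exists_rightDescent_of_ne_one hu
        have hj' : ℓ (u * σ j) < ℓ u := hj
        set v := u * σ j with hv
        have huv : u = v * σ j := by
          rw [hv, mul_assoc, cs.simple_mul_simple_self, mul_one]
        have hlv : ℓ (v * σ j) = ℓ v + 1 := by
          rw [← huv]
          have h2 := cs.length_mul_simple u j
          rw [← hv] at h2
          rcases h2 with h2 | h2 <;> omega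
        have hvlt : ℓ v < n := by rw [← hn, hv]; exact hj'
        have h1 := ih (ℓ v) hvlt v rfl
        rw [huv, star_concat_right cs hstar j v x hlv, star_concat_right cs hstar j v w hlv,
          star_simple_right cs hstar, star_simple_right cs hstar]
        exact maxR_mono cs j h1

theorem star_mono (hstar : DemazureLike cs star) {x x' w w' : W}
    (hx : BruhatLE cs x w) (hx' : BruhatLE cs x' w') :
    BruhatLE cs (star x x') (star w w') :=
  bruhat_trans cs (star_mono_left cs hstar hx x') (star_mono_right cs hstar hx' w)

end Star

end
end DemProof

theorem demazure_monotone {B W : Type*} [Group W] {M : CoxeterMatrix B}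
    (cs : CoxeterSystem M W) (star : W → W → W) (hstar : DemazureLike cs star)
    (x x' w w' : W) (hx : BruhatLE cs x w) (hx' : BruhatLE cs x' w') :
    BruhatLE cs (star x x') (star w w') :=
  DemProof.star_mono cs hstar hx hx'
end

section
/- Let (W, S) be a Coxeter group with Bruhat order ≤ and Demazure product ∗. For any w, w' ∈ W, the set {x y ; x ≤ w, y ≤ w', x, y ∈ W} equals the Bruhat interval {z ∈ W ; z ≤ w ∗ w'}. -/
namespace DemProof
open CoxeterSystem List
open scoped Classical

variable {B W : Type*} [Group W] {M : CoxeterMatrix B} (cs : CoxeterSystem M W)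

theorem conj_simple_cancel (i : B) (y : W) :
    cs.simple i * (cs.simple i * y * cs.simple i) * cs.simple i = y := by
  have e : cs.simple i * cs.simple i = 1 := cs.simple_mul_simple_self i
  calc cs.simple i * (cs.simple i * y * cs.simple i) * cs.simple i
      = (cs.simple i * cs.simple i) * y * (cs.simple i * cs.simple i) := by group
    _ = y := by rw [e, one_mul, mul_one]

theorem conj_simple_eq_iff (i : B) (t x : W) :
    cs.simple i * t * cs.simple i = x ↔ t = cs.simple i * x * cs.simple i := by
  constructor
  · rintro rfl; exact (conj_simple_cancel cs i t).symm
  · rintro rfl; exact conj_simple_cancel cs i x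

/-- the sign flip involution for a simple reflection -/
noncomputable def flip (i : B) : Equiv.Perm (W × ℤˣ) :=
  Function.Involutive.toPerm
    (fun p => (cs.simple i * p.1 * cs.simple i, if p.1 = cs.simple i then -p.2 else p.2))
    (by
      rintro ⟨t, ε⟩
      simp only [Prod.mk.injEq]
      refine ⟨conj_simple_cancel cs i t, ?_⟩
      by_cases h : t = cs.simple i
      · have h1 : cs.simple i * t * cs.simple i = cs.simple i := by
          rw [conj_simple_eq_iff cs, h, cs.simple_mul_simple_self, one_mul]
        simp [h, h1]
      · have h1 : cs.simple i * t * cs.simple i ≠ cs.simple i := by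
          rw [Ne, conj_simple_eq_iff cs]
          intro hc
          exact h (by rw [hc, cs.simple_mul_simple_self, one_mul])
        simp [h, h1])

theorem flip_apply (i : B) (t : W) (ε : ℤˣ) :
    flip cs i (t, ε) = (cs.simple i * t * cs.simple i, if t = cs.simple i then -ε else ε) := rfl

/-- auxiliary group identity -/
theorem mul_pow_comm (a b : W) (n : ℕ) : (a * b) ^ n * a = a * (b * a) ^ n := by
  induction n with
  | zero => simp
  | succ n ih =>
    calc (a * b) ^ (n + 1) * a = a * b * ((a * b) ^ n * a) := by
          rw [pow_succ', mul_assoc]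
      _ = a * b * (a * (b * a) ^ n) := by rw [ih]
      _ = a * ((b * a) * (b * a) ^ n) := by simp only [mul_assoc]
      _ = a * (b * a) ^ (n + 1) := by rw [← pow_succ']

end DemProof

namespace DemProof
open CoxeterSystem List
open scoped Classical

variable {B W : Type*} [Group W] {M : CoxeterMatrix B} (cs : CoxeterSystem M W)

noncomputable def chi (t x : W) : ℤˣ := if t = x then -1 else 1

/-- `altc cs i j k` is the word product of the alternating word of length `2k+1`. -/
def altc (i j : B) (k : ℕ) : W := cs.wordProd (CoxeterSystem.alternatingWord i j (2*k+1))

theorem altc_eq (i j : B) (k : ℕ) :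
    altc cs i j k = cs.simple j * (cs.simple i * cs.simple j) ^ k := by
  rw [altc, cs.prod_alternatingWord_eq_mul_pow]
  have h1 : ¬ Even (2*k+1) := by simp [Nat.even_add_one, parity_simps]
  have h2 : (2*k+1)/2 = k := by omega
  rw [if_neg h1, h2]

theorem conj_eq_iff' (p t x : W) : p * t * p⁻¹ = x ↔ t = p⁻¹ * x * p := by
  constructor
  · rintro rfl; group
  · rintro rfl; group

theorem neg_ite (c : Prop) [Decidable c] (x : ℤˣ) :
    (if c then -x else x) = (if c then (-1:ℤˣ) else 1) * x := by
  split <;> simp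

theorem second_comp (c1 c2 : Prop) [Decidable c1] [Decidable c2] (z ε : ℤˣ) :
    (if c2 then -(if c1 then -(z*ε) else z*ε) else (if c1 then -(z*ε) else z*ε))
      = z * (if c1 then (-1:ℤˣ) else 1) * (if c2 then (-1:ℤˣ) else 1) * ε := by
  by_cases h1 : c1 <;> by_cases h2 : c2 <;>
    simp [h1, h2, mul_comm, mul_left_comm, mul_assoc]

theorem flip_pow (i j : B) : ∀ (n : ℕ) (t : W) (ε : ℤˣ),
    ((flip cs i * flip cs j) ^ n) (t, ε) =
      ((cs.simple i * cs.simple j)^n * t * ((cs.simple i * cs.simple j)^n)⁻¹,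
       (∏ k ∈ Finset.range (2*n), chi t (altc cs i j k)) * ε) := by
  intro n
  induction n with
  | zero => intro t ε; simp
  | succ n ih =>
    intro t ε
    have hq : ((cs.simple i * cs.simple j)^n)⁻¹ = (cs.simple j * cs.simple i)^n := by
      rw [← inv_pow, mul_inv_rev, cs.inv_simple, cs.inv_simple]
    have key1 : ((cs.simple i * cs.simple j)^n)⁻¹ * cs.simple j * (cs.simple i * cs.simple j)^n
        = altc cs i j (2*n) := by
      rw [hq, altc_eq]
      calc (cs.simple j * cs.simple i) ^ n * cs.simple j * (cs.simple i * cs.simple j) ^ n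
          = cs.simple j * (cs.simple i * cs.simple j) ^ n * (cs.simple i * cs.simple j) ^ n := by
            rw [mul_pow_comm]
        _ = cs.simple j * (cs.simple i * cs.simple j) ^ (2*n) := by
            rw [mul_assoc, ← pow_add, two_mul]
    have key2 : ((cs.simple i * cs.simple j)^n)⁻¹ *
          (cs.simple j * cs.simple i * cs.simple j) * (cs.simple i * cs.simple j)^n
        = altc cs i j (2*n+1) := by
      rw [hq, altc_eq]
      calc (cs.simple j * cs.simple i) ^ n * (cs.simple j * cs.simple i * cs.simple j) *
            (cs.simple i * cs.simple j) ^ n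
          = ((cs.simple j * cs.simple i) ^ n * cs.simple j) *
            ((cs.simple i * cs.simple j) * (cs.simple i * cs.simple j) ^ n) := by
            simp only [mul_assoc]
        _ = cs.simple j * (cs.simple i * cs.simple j) ^ n *
            ((cs.simple i * cs.simple j) ^ (n+1)) := by rw [mul_pow_comm, ← pow_succ']
        _ = cs.simple j * (cs.simple i * cs.simple j) ^ (2*n+1) := by
            rw [mul_assoc, ← pow_add]; ring_nf
    set p := (cs.simple i * cs.simple j)^n with hp
    have c1 : (p * t * p⁻¹ = cs.simple j) ↔ t = altc cs i j (2*n) := by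
      rw [conj_eq_iff', key1]
    have c2 : (cs.simple j * (p * t * p⁻¹) * cs.simple j = cs.simple i)
        ↔ t = altc cs i j (2*n+1) := by
      rw [show cs.simple j * (p * t * p⁻¹) * cs.simple j
          = (cs.simple j * p) * t * (cs.simple j * p)⁻¹ by
            rw [mul_inv_rev, cs.inv_simple]; group]
      rw [conj_eq_iff', ← key2, mul_inv_rev, cs.inv_simple]
      constructor <;> (rintro rfl; group)
    rw [pow_succ', Equiv.Perm.mul_apply, ih, Equiv.Perm.mul_apply, flip_apply, flip_apply]
    simp only [c1, c2, Prod.mk.injEq]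
    refine ⟨?_, ?_⟩
    · rw [pow_succ', mul_inv_rev, mul_inv_rev, cs.inv_simple, cs.inv_simple]
      simp only [mul_assoc]
      rfl
    · have hprod : (∏ k ∈ Finset.range (2*(n+1)), chi t (altc cs i j k)) =
          (∏ k ∈ Finset.range (2*n), chi t (altc cs i j k)) *
            chi t (altc cs i j (2*n)) * chi t (altc cs i j (2*n+1)) := by
        rw [show 2*(n+1) = 2*n + 1 + 1 by ring, Finset.prod_range_succ, Finset.prod_range_succ]
      rw [hprod]
      simp only [chi]
      exact second_comp _ _ _ _

end DemProof

namespace DemProof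
open CoxeterSystem List
open scoped Classical

variable {B W : Type*} [Group W] {M : CoxeterMatrix B} (cs : CoxeterSystem M W)

theorem flip_liftable : M.IsLiftable (fun i => flip cs i) := by
  intro i j
  apply Equiv.ext
  rintro ⟨t, ε⟩
  have h1 : (cs.simple i * cs.simple j) ^ (M i j) = 1 := cs.simple_mul_simple_pow i j
  have h2 : ∀ k, altc cs i j (M i j + k) = altc cs i j k := by
    intro k
    rw [altc_eq, altc_eq, pow_add, h1, one_mul]
  have h3 : (∏ k ∈ Finset.range (2 * M i j), chi t (altc cs i j k)) = 1 := by
    rw [two_mul, Finset.prod_range_add]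
    simp only [h2]
    exact Int.units_mul_self _
  show ((flip cs i * flip cs j) ^ (M i j)) (t, ε) = (t, ε)
  rw [flip_pow, h1, h3]
  simp

/-- The sign representation detecting inversions. -/
noncomputable def rho : W →* Equiv.Perm (W × ℤˣ) :=
  cs.lift ⟨fun i => flip cs i, flip_liftable cs⟩

theorem rho_simple (i : B) : rho cs (cs.simple i) = flip cs i :=
  cs.lift_apply_simple (flip_liftable cs) i

noncomputable def sgn (ω : List B) (t : W) : ℤˣ := ((cs.rightInvSeq ω).map (chi t)).prod

noncomputable def eta (w t : W) : ℤˣ := (rho cs w (t, 1)).2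

theorem rho_word (ω : List B) : ∀ (t : W) (ε : ℤˣ),
    rho cs (cs.wordProd ω) (t, ε) =
      (cs.wordProd ω * t * (cs.wordProd ω)⁻¹, sgn cs ω t * ε) := by
  induction ω with
  | nil => intro t ε; simp [sgn]
  | cons i ω ih =>
    intro t ε
    have hris : cs.rightInvSeq (i :: ω) =
        ((cs.wordProd ω)⁻¹ * cs.simple i * cs.wordProd ω) :: cs.rightInvSeq ω := rfl
    have hsgn : sgn cs (i :: ω) t =
        chi t ((cs.wordProd ω)⁻¹ * cs.simple i * cs.wordProd ω) * sgn cs ω t := by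
      rw [sgn, hris, List.map_cons, List.prod_cons]; rfl
    rw [cs.wordProd_cons, map_mul, Equiv.Perm.mul_apply, ih, rho_simple, flip_apply, hsgn]
    have hcond : (cs.wordProd ω * t * (cs.wordProd ω)⁻¹ = cs.simple i)
        ↔ t = (cs.wordProd ω)⁻¹ * cs.simple i * cs.wordProd ω := conj_eq_iff' _ _ _
    refine Prod.ext ?_ ?_
    · show cs.simple i * (cs.wordProd ω * t * (cs.wordProd ω)⁻¹) * cs.simple i
        = (cs.simple i * cs.wordProd ω) * t * (cs.simple i * cs.wordProd ω)⁻¹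
      rw [mul_inv_rev, cs.inv_simple]
      simp only [mul_assoc]
    · show (if cs.wordProd ω * t * (cs.wordProd ω)⁻¹ = cs.simple i
          then -(sgn cs ω t * ε) else sgn cs ω t * ε)
        = chi t ((cs.wordProd ω)⁻¹ * cs.simple i * cs.wordProd ω) * sgn cs ω t * ε
      rw [chi]
      by_cases h : t = (cs.wordProd ω)⁻¹ * cs.simple i * cs.wordProd ω
      · rw [if_pos (hcond.mpr h), if_pos h]
        simp [mul_assoc]
      · rw [if_neg (fun hc => h (hcond.mp hc)), if_neg h, one_mul]

theorem eta_word (ω : List B) (t : W) : eta cs (cs.wordProd ω) t = sgn cs ω t := by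
  rw [eta, rho_word]; simp

theorem rho_apply (w t : W) (ε : ℤˣ) :
    rho cs w (t, ε) = (w * t * w⁻¹, eta cs w t * ε) := by
  obtain ⟨ω, rfl⟩ := cs.wordProd_surjective w
  rw [rho_word, eta_word]

theorem eta_reflection_self {t : W} (ht : cs.IsReflection t) : eta cs t t = -1 := by
  obtain ⟨q, i, rfl⟩ := ht
  set t := q * cs.simple i * q⁻¹ with hts
  set a := eta cs q⁻¹ t with ha
  have h1 : rho cs q⁻¹ (t, 1) = (cs.simple i, a) := by
    rw [rho_apply, mul_one]
    congr 1
    rw [hts]; group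
  have h4 : eta cs q (cs.simple i) * a = 1 := by
    have : rho cs q (rho cs q⁻¹ (t, 1)) = (t, 1) := by
      rw [← Equiv.Perm.mul_apply, ← map_mul, mul_inv_cancel, map_one, Equiv.Perm.one_apply]
    rw [h1, rho_apply] at this
    have := congrArg Prod.snd this
    simpa using this
  have h2 : rho cs (cs.simple i) (cs.simple i, a) = (cs.simple i, -a) := by
    rw [rho_simple, flip_apply, if_pos rfl]
    congr 1
    rw [mul_assoc, cs.simple_mul_simple_self, mul_one]
  have h3 : rho cs t (t, 1) = (t * t * t⁻¹, -(eta cs q (cs.simple i) * a)) := by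
    have e : rho cs t (t, 1) = rho cs q (rho cs (cs.simple i) (rho cs q⁻¹ (t, 1))) := by
      rw [← Equiv.Perm.mul_apply, ← Equiv.Perm.mul_apply, ← map_mul, ← map_mul, hts]
    rw [e, h1, h2, rho_apply]
    refine Prod.ext ?_ ?_
    · show q * cs.simple i * q⁻¹ = t * t * t⁻¹
      rw [← hts]; group
    · exact mul_neg _ _
  show (rho cs t (t, 1)).2 = -1
  rw [h3]
  show -(eta cs q (cs.simple i) * a) = -1
  rw [h4]

end DemProof

namespace DemProof
open CoxeterSystem List
open scoped Classical

variable {B W : Type*} [Group W] {M : CoxeterMatrix B} (cs : CoxeterSystem M W)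

theorem eta_mul_reflection (w : W) {t : W} (ht : cs.IsReflection t) :
    eta cs (w * t) t = - eta cs w t := by
  have e : rho cs (w * t) (t, 1) = rho cs w (rho cs t (t, 1)) := by
    rw [← Equiv.Perm.mul_apply, ← map_mul]
  have h1 : rho cs t (t, 1) = (t, -1) := by
    rw [rho_apply]
    refine Prod.ext ?_ ?_
    · show t * t * t⁻¹ = t
      group
    · show eta cs t t * 1 = -1
      rw [mul_one, eta_reflection_self cs ht]
  show (rho cs (w * t) (t, 1)).2 = - eta cs w t
  rw [e, h1, rho_apply]
  show eta cs w t * (-1) = - eta cs w t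
  simp

theorem length_simple_mul_le (i : B) (x : W) :
    cs.length (cs.simple i * x) ≤ cs.length x + 1 := by
  have := cs.length_mul_le (cs.simple i) x
  rwa [cs.length_simple, add_comm] at this

theorem eta_neg_iff : ∀ (n : ℕ) (w t : W), cs.length w ≤ n → cs.IsReflection t →
    (cs.length (w * t) < cs.length w ↔ eta cs w t = -1) := by
  intro n
  induction n with
  | zero =>
    intro w t hw ht
    have hw1 : w = 1 := cs.length_eq_zero_iff.mp (Nat.le_zero.mp hw)
    subst hw1
    constructor
    · intro h
      simp [cs.length_one] at h
    · intro h
      have : eta cs 1 t = 1 := by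
        rw [eta, map_one, Equiv.Perm.one_apply]
      rw [this] at h
      exact absurd h (by decide)
  | succ n IH =>
    intro w t hw ht
    by_cases hn : cs.length w ≤ n
    · exact IH w t hn ht
    have hwn : cs.length w = n + 1 := by omega
    constructor
    · -- forward
      intro h
      have hv : cs.length (w * t) ≤ n := by omega
      have hwt : w * t * t = w := by
        rw [mul_assoc, ht.mul_self, mul_one]
      have h2 : ¬ cs.length (w * t * t) < cs.length (w * t) := by
        rw [hwt]; omega
      have h3 : eta cs (w * t) t ≠ -1 := fun hc => h2 ((IH (w * t) t hv ht).mpr hc)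
      have h4 : eta cs (w * t) t = 1 := by
        rcases Int.units_eq_one_or (eta cs (w * t) t) with h' | h'
        · exact h'
        · exact absurd h' h3
      have h5 := eta_mul_reflection cs (w * t) ht
      rw [hwt, h4] at h5
      simpa using h5
    · -- reverse
      intro hη
      have hw1 : w ≠ 1 := by
        intro hc; rw [hc, cs.length_one] at hwn; omega
      obtain ⟨i, hi⟩ := cs.exists_leftDescent_of_ne_one hw1
      have hi' : cs.length (cs.simple i * w) < cs.length w := hi
      set u := cs.simple i * w with hu
      have hw_eq : w = cs.simple i * u := by
        rw [hu, ← mul_assoc, cs.simple_mul_simple_self, one_mul]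
      have hsplit : eta cs w t =
          (if u * t * u⁻¹ = cs.simple i then -(eta cs u t) else eta cs u t) := by
        have e : rho cs w (t, 1) = rho cs (cs.simple i) (rho cs u (t, 1)) := by
          rw [← Equiv.Perm.mul_apply, ← map_mul, ← hw_eq]
        show (rho cs w (t, 1)).2 = _
        rw [e, rho_apply cs u t 1, mul_one, rho_simple, flip_apply]
      by_cases hc : u * t * u⁻¹ = cs.simple i
      · have hwt : w * t = u := by
          rw [hw_eq]
          calc cs.simple i * u * t = cs.simple i * (u * t * u⁻¹) * u := by group
            _ = cs.simple i * cs.simple i * u := by rw [hc]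
            _ = u := by rw [cs.simple_mul_simple_self, one_mul]
        rw [hwt]
        exact hi'
      · rw [hsplit, if_neg hc] at hη
        have h6 : cs.length (u * t) < cs.length u :=
          (IH u t (by omega) ht).mpr hη
        have h7 : w * t = cs.simple i * (u * t) := by rw [hw_eq]; group
        have h8 := length_simple_mul_le cs i (u * t)
        rw [h7]
        omega

theorem eta_neg_of_lt {w t : W} (ht : cs.IsReflection t)
    (h : cs.length (w * t) < cs.length w) : eta cs w t = -1 :=
  (eta_neg_iff cs (cs.length w) w t le_rfl ht).mp h

/-- Strong exchange property. -/
theorem strong_exchange_s11 (ω : List B) {t : W} (ht : cs.IsReflection t)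
    (h : cs.length (cs.wordProd ω * t) < cs.length (cs.wordProd ω)) :
    ∃ j, ∃ _ : j < ω.length, cs.wordProd ω * t = cs.wordProd (ω.eraseIdx j) := by
  have h1 : sgn cs ω t = -1 := by
    rw [← eta_word]; exact eta_neg_of_lt cs ht h
  have h2 : t ∈ cs.rightInvSeq ω := by
    by_contra hmem
    have : sgn cs ω t = 1 := by
      rw [sgn]
      apply List.prod_eq_one
      intro x hx
      obtain ⟨t', ht', rfl⟩ := List.mem_map.mp hx
      rw [chi, if_neg]
      intro hc; exact hmem (hc ▸ ht')
    rw [this] at h1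
    exact absurd h1 (by decide)
  obtain ⟨j, hj, hjt⟩ := List.mem_iff_getElem.mp h2
  have hj' : j < ω.length := by
    rwa [cs.length_rightInvSeq] at hj
  refine ⟨j, hj', ?_⟩
  have := cs.wordProd_mul_getD_rightInvSeq ω j
  rwa [List.getD_eq_getElem _ _ hj, hjt] at this

end DemProof

namespace DemProof
open CoxeterSystem List Relation

variable {B W : Type*} [Group W] {M : CoxeterMatrix B} (cs : CoxeterSystem M W)

/-- one Bruhat step -/
def bstep (a b : W) : Prop :=
  ∃ t : W, cs.IsReflection t ∧ b = a * t ∧ cs.length a < cs.length b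

theorem bruhatLE_def (x w : W) : BruhatLE cs x w ↔ ReflTransGen (bstep cs) x w := Iff.rfl

theorem ble_refl (x : W) : BruhatLE cs x x := ReflTransGen.refl

theorem ble_trans {x y z : W} (h1 : BruhatLE cs x y) (h2 : BruhatLE cs y z) :
    BruhatLE cs x z := ReflTransGen.trans h1 h2

theorem ble_length {x w : W} (h : BruhatLE cs x w) : cs.length x ≤ cs.length w := by
  induction h with
  | refl => exact le_rfl
  | tail _ h ih =>
    obtain ⟨t, _, _, hlt⟩ := h
    omega

theorem ble_one {x : W} (h : BruhatLE cs x 1) : x = 1 := by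
  have := ble_length cs h
  rw [cs.length_one] at this
  exact cs.length_eq_zero_iff.mp (Nat.le_zero.mp this)

/-- single upward step, right version -/
theorem ble_step {a : W} {t : W} (ht : cs.IsReflection t)
    (h : cs.length a < cs.length (a * t)) : BruhatLE cs a (a * t) :=
  ReflTransGen.single ⟨t, ht, rfl, h⟩

/-- single upward step, left version -/
theorem ble_step_left {a : W} {t : W} (ht : cs.IsReflection t)
    (h : cs.length a < cs.length (t * a)) : BruhatLE cs a (t * a) := by
  have h1 : t * a = a * (a⁻¹ * t * a) := by group
  have h2 : cs.IsReflection (a⁻¹ * t * a) := by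
    have := ht.conj a⁻¹
    rwa [inv_inv] at this
  rw [h1]
  exact ble_step cs h2 (by rwa [← h1])

theorem ble_simple_step {a : W} (i : B)
    (h : cs.length a < cs.length (cs.simple i * a)) :
    BruhatLE cs a (cs.simple i * a) :=
  ble_step_left cs (cs.isReflection_simple i) h

theorem one_ble (w : W) : BruhatLE cs 1 w := by
  generalize hn : cs.length w = n
  induction n generalizing w with
  | zero => rw [cs.length_eq_zero_iff.mp hn]; exact ble_refl cs 1
  | succ n IH =>
    have hw1 : w ≠ 1 := by
      intro hc; rw [hc, cs.length_one] at hn; omega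
    obtain ⟨i, hi⟩ := cs.exists_leftDescent_of_ne_one hw1
    have hi' : cs.length (cs.simple i * w) < cs.length w := hi
    have hlen : cs.length (cs.simple i * w) = n := by
      rcases cs.length_simple_mul w i with h | h <;> omega
    have h1 : BruhatLE cs 1 (cs.simple i * w) := IH _ hlen
    have h2 : BruhatLE cs (cs.simple i * w) w := by
      have := ble_simple_step cs i (a := cs.simple i * w)
        (by rw [← mul_assoc, cs.simple_mul_simple_self, one_mul]; omega)
      rwa [← mul_assoc, cs.simple_mul_simple_self, one_mul] at this
    exact ble_trans cs h1 h2

/-- The dichotomy lemma, via strong exchange. -/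
theorem dichotomy {a b : W} {t : W} (i : B) (ht : cs.IsReflection t)
    (hb : b = a * t) (hab : cs.length a < cs.length b)
    (h1 : cs.length a < cs.length (cs.simple i * a))
    (h2 : cs.length (cs.simple i * b) < cs.length (cs.simple i * a)) :
    cs.simple i * b = a := by
  have hsa : cs.length (cs.simple i * a) = cs.length a + 1 := by
    rcases cs.length_simple_mul a i with h | h <;> omega
  have hsb_lt : cs.length (cs.simple i * b) < cs.length b := by omega
  have hsb : cs.length (cs.simple i * b) + 1 = cs.length b := by
    rcases cs.length_simple_mul b i with h | h <;> omega
  obtain ⟨ζ, hζlen, hζ⟩ := cs.exists_reduced_word (cs.simple i * b)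
  have hbword : cs.wordProd (i :: ζ) = b := by
    rw [cs.wordProd_cons, ← hζ, ← mul_assoc, cs.simple_mul_simple_self, one_mul]
  have hat : cs.wordProd (i :: ζ) * t = a := by
    rw [hbword, hb, mul_assoc, ht.mul_self, mul_one]
  have hlt : cs.length (cs.wordProd (i :: ζ) * t) < cs.length (cs.wordProd (i :: ζ)) := by
    rw [hbword]
    have hbt : b * t = a := by rw [hb, mul_assoc, ht.mul_self, mul_one]
    rw [hbt]; exact hab
  obtain ⟨j, hj, hjeq⟩ := strong_exchange_s11 cs (i :: ζ) ht hlt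
  rw [hat] at hjeq
  match j with
  | 0 =>
    rw [List.eraseIdx_cons_zero] at hjeq
    rw [hζ]; exact hjeq.symm
  | (k+1) =>
    exfalso
    rw [List.eraseIdx_cons_succ, cs.wordProd_cons] at hjeq
    have hsa_eq : cs.simple i * a = cs.wordProd (ζ.eraseIdx k) := by
      rw [hjeq, ← mul_assoc, cs.simple_mul_simple_self, one_mul]
    have hk : k < ζ.length := by
      simp only [List.length_cons] at hj; omega
    have hlen1 : (ζ.eraseIdx k).length = ζ.length - 1 := by
      rw [List.length_eraseIdx]; simp [hk]
    have := cs.length_wordProd_le (ζ.eraseIdx k)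
    rw [← hsa_eq] at this
    have hred : cs.length (cs.wordProd ζ) = ζ.length := hζlen
    rw [← hζ] at hred
    omega

end DemProof

namespace DemProof
open CoxeterSystem List Relation

variable {B W : Type*} [Group W] {M : CoxeterMatrix B} (cs : CoxeterSystem M W)

theorem simple_simple_cancel (i : B) (x : W) :
    cs.simple i * (cs.simple i * x) = x := by
  rw [← mul_assoc, cs.simple_mul_simple_self, one_mul]

/-- monotonicity of left multiplication by a simple reflection -/
theorem ble_smul_mono (i : B) {x y : W} (h : BruhatLE cs x y)
    (hy : cs.length y < cs.length (cs.simple i * y)) :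
    BruhatLE cs (cs.simple i * x) (cs.simple i * y) := by
  induction h using Relation.ReflTransGen.head_induction_on with
  | refl => exact ble_refl cs _
  | head hstep hrest ih =>
    rename_i z c
    obtain ⟨t, ht, rfl, hlt⟩ := hstep
    rcases cs.length_simple_mul z i with hup | hdown
    · -- length goes up
      have hsc : cs.simple i * (z * t) = (cs.simple i * z) * t := by rw [mul_assoc]
      rcases Nat.lt_trichotomy (cs.length (cs.simple i * z))
        (cs.length (cs.simple i * (z * t))) with hlt2 | heq | hgt
      · refine ble_trans cs ?_ ih
        rw [hsc] at hlt2 ⊢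
        exact ble_step cs ht hlt2
      · exfalso
        rw [hsc] at heq
        exact ht.length_mul_left_ne (cs.simple i * z) heq.symm
      · have hzz := dichotomy cs i ht rfl hlt (by omega) hgt
        have : cs.simple i * z = z * t := by
          have h5 := congrArg (fun x => cs.simple i * x) hzz
          simpa [simple_simple_cancel] using h5.symm
        rw [this]
        refine ble_trans cs hrest (ble_simple_step cs i hy)
    · -- length goes down : s z ≤ z ≤ z t ≤ y ≤ s y
      have h1 : BruhatLE cs (cs.simple i * z) z := by
        have := ble_simple_step cs i (a := cs.simple i * z)
          (by rw [simple_simple_cancel]; omega)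
        rwa [simple_simple_cancel] at this
      refine ble_trans cs h1 (ble_trans cs (ble_step cs ht hlt)
        (ble_trans cs hrest (ble_simple_step cs i hy)))

/-- The lifting property (Property Z). -/
theorem lifting (i : B) {v z : W} (hv : cs.length v < cs.length (cs.simple i * v)) :
    BruhatLE cs z (cs.simple i * v) ↔
      BruhatLE cs z v ∨ BruhatLE cs (cs.simple i * z) v := by
  constructor
  · intro h
    induction h using Relation.ReflTransGen.head_induction_on with
    | refl =>
      right
      rw [simple_simple_cancel]
      exact ble_refl cs _
    | head hstep hrest ih =>
      rename_i z c
      obtain ⟨t, ht, rfl, hlt⟩ := hstep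
      rcases ih with hcv | hsc
      · exact Or.inl (ble_trans cs (ble_step cs ht hlt) hcv)
      · have hsceq : cs.simple i * (z * t) = (cs.simple i * z) * t := by rw [mul_assoc]
        rcases Nat.lt_trichotomy (cs.length (cs.simple i * z))
          (cs.length (cs.simple i * (z * t))) with hlt2 | heq | hgt
        · right
          refine ble_trans cs ?_ hsc
          rw [hsceq] at hlt2 ⊢
          exact ble_step cs ht hlt2
        · exfalso
          rw [hsceq] at heq
          exact ht.length_mul_left_ne (cs.simple i * z) heq.symm
        · rcases cs.length_simple_mul z i with hup | hdown
          · have hzz := dichotomy cs i ht rfl hlt (by omega) hgt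
            left
            rw [← hzz]
            exact hsc
          · exfalso
            rcases cs.length_simple_mul (z * t) i with h' | h' <;> omega
  · rintro (h | h)
    · exact ble_trans cs h (ble_simple_step cs i hv)
    · rcases cs.length_simple_mul z i with hup | hdown
      · exact ble_trans cs (ble_simple_step cs i (by omega))
          (ble_trans cs h (ble_simple_step cs i hv))
      · have := ble_smul_mono cs i h hv
        rwa [simple_simple_cancel] at this

end DemProof

namespace DemProof
open CoxeterSystem List Relation

variable {B W : Type*} [Group W] {M : CoxeterMatrix B} (cs : CoxeterSystem M W)

/-- descent absorption -/
theorem descent_absorb (i : B) {v z : W}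
    (hd : cs.length (cs.simple i * v) < cs.length v)
    (h : BruhatLE cs (cs.simple i * z) v) : BruhatLE cs z v := by
  have hv0 : v = cs.simple i * (cs.simple i * v) := (simple_simple_cancel cs i v).symm
  have hlen : cs.length (cs.simple i * v) <
      cs.length (cs.simple i * (cs.simple i * v)) := by
    rw [simple_simple_cancel]; exact hd
  rw [hv0] at h ⊢
  rcases (lifting cs i hlen).mp h with h1 | h1
  · exact (lifting cs i hlen).mpr (Or.inr h1)
  · rw [simple_simple_cancel] at h1
    exact (lifting cs i hlen).mpr (Or.inl h1)

theorem main_aux (star : W → W → W) (hstar : DemazureLike cs star) :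
    ∀ (n : ℕ) (w : W), cs.length w ≤ n → ∀ (w' : W),
    {z : W | ∃ x y : W, BruhatLE cs x w ∧ BruhatLE cs y w' ∧ z = x * y} =
      {z : W | BruhatLE cs z (star w w')} := by
  obtain ⟨hassoc, hadd, habs⟩ := hstar
  intro n
  induction n with
  | zero =>
    intro w hw w'
    have hw1 : w = 1 := cs.length_eq_zero_iff.mp (Nat.le_zero.mp hw)
    subst hw1
    have hstar1 : star 1 w' = w' := by
      rw [hadd 1 w' (by rw [one_mul, cs.length_one, zero_add]), one_mul]
    rw [hstar1]
    ext z
    simp only [Set.mem_setOf_eq]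
    constructor
    · rintro ⟨x, y, hx, hy, rfl⟩
      rw [ble_one cs hx, one_mul]
      exact hy
    · intro hz
      exact ⟨1, z, ble_refl cs 1, hz, (one_mul z).symm⟩
  | succ n IH =>
    intro w hw w'
    by_cases hn : cs.length w ≤ n
    · exact IH w hn w'
    have hw1 : w ≠ 1 := by
      intro hc
      rw [hc, cs.length_one] at hn
      omega
    obtain ⟨i, hi⟩ := cs.exists_leftDescent_of_ne_one hw1
    have hi' : cs.length (cs.simple i * w) < cs.length w := hi
    set u := cs.simple i * w with hu
    have hw_eq : w = cs.simple i * u := (simple_simple_cancel cs i w).symm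
    have hlu : cs.length u < cs.length w := hi'
    have hlun : cs.length u ≤ n := by omega
    have husv : cs.length u < cs.length (cs.simple i * u) := by
      rw [← hw_eq]; exact hlu
    have hlosv : cs.length (cs.simple i * u) = cs.length u + 1 := by
      rcases cs.length_simple_mul u i with h | h <;> omega
    set v := star u w' with hv
    have IHu := IH u hlun w'
    have IHu' : ∀ z : W, (∃ x y : W, BruhatLE cs x u ∧ BruhatLE cs y w' ∧ z = x * y)
        ↔ BruhatLE cs z v := fun z => by
      have := Set.ext_iff.mp IHu z
      simpa using this
    have huw : BruhatLE cs u w := by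
      rw [hw_eq]; exact ble_simple_step cs i husv
    have hsw : star w w' = star (cs.simple i) v := by
      have h1 : star (cs.simple i) u = cs.simple i * u :=
        hadd _ _ (by rw [cs.length_simple, hlosv]; omega)
      rw [hw_eq, ← h1, hassoc]
    rcases cs.length_simple_mul v i with hvup | hvdown
    · -- ascent case : star w w' = s i * v
      have hvlt : cs.length v < cs.length (cs.simple i * v) := by omega
      have hstar2 : star (cs.simple i) v = cs.simple i * v :=
        hadd _ _ (by rw [cs.length_simple, hvup]; omega)
      rw [hsw, hstar2]
      ext z
      simp only [Set.mem_setOf_eq]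
      constructor
      · rintro ⟨x, y, hx, hy, rfl⟩
        rw [hw_eq] at hx
        rcases (lifting cs i husv).mp hx with hxu | hsxu
        · exact (lifting cs i hvlt).mpr (Or.inl ((IHu' _).mp ⟨x, y, hxu, hy, rfl⟩))
        · exact (lifting cs i hvlt).mpr (Or.inr ((IHu' _).mp
            ⟨cs.simple i * x, y, hsxu, hy, by rw [mul_assoc]⟩))
      · intro hz
        rcases (lifting cs i hvlt).mp hz with hzv | hszv
        · obtain ⟨x, y, hx, hy, rfl⟩ := (IHu' _).mpr hzv
          exact ⟨x, y, ble_trans cs hx huw, hy, rfl⟩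
        · obtain ⟨x, y, hx, hy, hxy⟩ := (IHu' _).mpr hszv
          refine ⟨cs.simple i * x, y, ?_, hy, ?_⟩
          · rw [hw_eq]
            exact (lifting cs i husv).mpr (Or.inr (by rwa [simple_simple_cancel]))
          · rw [mul_assoc, ← hxy, simple_simple_cancel]
    · -- descent case : star w w' = v
      have hvd : cs.length (cs.simple i * v) < cs.length v := by omega
      have hstar3 : star (cs.simple i) v = v := habs i v hvd
      rw [hsw, hstar3]
      ext z
      simp only [Set.mem_setOf_eq]
      constructor
      · rintro ⟨x, y, hx, hy, rfl⟩
        rw [hw_eq] at hx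
        rcases (lifting cs i husv).mp hx with hxu | hsxu
        · exact (IHu' _).mp ⟨x, y, hxu, hy, rfl⟩
        · have hz : BruhatLE cs (cs.simple i * (x * y)) v :=
            (IHu' _).mp ⟨cs.simple i * x, y, hsxu, hy, by rw [mul_assoc]⟩
          exact descent_absorb cs i hvd hz
      · intro hz
        obtain ⟨x, y, hx, hy, rfl⟩ := (IHu' _).mpr hz
        exact ⟨x, y, ble_trans cs hx huw, hy, rfl⟩

end DemProof

theorem demazure_interval_eq_products {B W : Type*} [Group W] {M : CoxeterMatrix B}
    (cs : CoxeterSystem M W) (star : W → W → W) (hstar : DemazureLike cs star)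
    (w w' : W) :
    {z : W | ∃ x y : W, BruhatLE cs x w ∧ BruhatLE cs y w' ∧ z = x * y} =
      {z : W | BruhatLE cs z (star w w')} :=
  DemProof.main_aux cs star hstar (cs.length w) w le_rfl w'
end
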